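/- arXiv:1507.01134 — 13 statements merged into one kernel-verified Lean document; each statement's English description precedes it below -/
import Mathlib

section
/- Let K be a group and S a subgroup of K such that the only normal subgroup of K contained in S is the trivial subgroup. Suppose there exist left transversals A and B to S in K such that a⁻¹b⁻¹ab ∈ S for all a ∈ A and b ∈ B, and such that A ∪ B generates K. Then K is isomorphic to the multiplication group Mult(L) of some loop L. -/
/-- A loop: a binary operation with two-sided identity such that all left and
right translations are bijections. -/
structure LoopStruct (L : Type*) where
  mul : L → L → L
  e : L
  one_mul : ∀ x, mul e x = x
  mul_one : ∀ x, mul x e = x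
  left_bij : ∀ a, Function.Bijective (mul a)
  right_bij : ∀ a, Function.Bijective (fun x => mul x a)

/-- The left translation `λ_a` as a permutation of `L`. -/
noncomputable def leftTrans {L : Type*} (S : LoopStruct L) (a : L) : Equiv.Perm L :=
  Equiv.ofBijective _ (S.left_bij a)

/-- The right translation `ρ_a` as a permutation of `L`. -/
noncomputable def rightTrans {L : Type*} (S : LoopStruct L) (a : L) : Equiv.Perm L :=
  Equiv.ofBijective _ (S.right_bij a)

/-- The multiplication group `Mult(L)`: the subgroup of the symmetric group on `L`
generated by all left and right translations. -/
noncomputable def MultGroup {L : Type*} (S : LoopStruct L) : Subgroup (Equiv.Perm L) :=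
  Subgroup.closure (Set.range (leftTrans S) ∪ Set.range (rightTrans S))

/-- `A` is a left transversal to `S` in the ambient group: every element has a
unique factorization `k = a * s` with `a ∈ A`, `s ∈ S`. -/
def IsLeftTransversal {G : Type*} [Group G] (A S : Set G) : Prop :=
  ∀ k : G, ∃! p : G × G, p.1 ∈ A ∧ p.2 ∈ S ∧ k = p.1 * p.2

/-- Kepka's criterion: a group with S-connected left transversals generating the
group, where the core of `S` is trivial, is the multiplication group of a loop. -/
theorem kepka_criterion (K : Type) [Group K] (S : Subgroup K)
    (hcore : ∀ N : Subgroup K, N.Normal → N ≤ S → N = ⊥)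
    (A B : Set K)
    (hA : IsLeftTransversal A (S : Set K))
    (hB : IsLeftTransversal B (S : Set K))
    (hconn : ∀ a ∈ A, ∀ b ∈ B, a⁻¹ * b⁻¹ * a * b ∈ S)
    (hgen : Subgroup.closure (A ∪ B) = ⊤) :
    ∃ (M : Type) (SL : LoopStruct M), Nonempty (K ≃* ↥(MultGroup SL)) := by

  classical
  set φ := MulAction.toPermHom K (K ⧸ S) with hφdef
  have hker : φ.ker = ⊥ := by
    rw [← Subgroup.normalCore_eq_ker]
    exact hcore _ (Subgroup.normalCore_normal S) (Subgroup.normalCore_le S)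
  have hinj : Function.Injective φ := (MonoidHom.ker_eq_bot_iff φ).mp hker
  -- uniqueness of transversal representatives within a coset
  have uniq : ∀ (T : Set K), IsLeftTransversal T (S : Set K) → ∀ a a', a ∈ T → a' ∈ T →
      (QuotientGroup.mk a : K ⧸ S) = QuotientGroup.mk a' → a = a' := by
    intro T hT a a' ha ha' h
    have hmem : a⁻¹ * a' ∈ S := QuotientGroup.eq.mp h
    obtain ⟨p, hp, hpu⟩ := hT a'
    have h1 : ((a', 1) : K × K) = p := hpu (a', 1) ⟨ha', S.one_mem, by simp⟩
    have h2 : ((a, a⁻¹ * a') : K × K) = p := hpu (a, a⁻¹ * a') ⟨ha, hmem, by group⟩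
    have := h1.trans h2.symm
    exact (congrArg Prod.fst this).symm
  -- existence of representatives
  have exRep : ∀ (T : Set K), IsLeftTransversal T (S : Set K) →
      ∀ x : K ⧸ S, ∃ t, t ∈ T ∧ (QuotientGroup.mk t : K ⧸ S) = x := by
    intro T hT x
    obtain ⟨p, ⟨hp1, hp2, hp3⟩, -⟩ := hT x.out
    refine ⟨p.1, hp1, ?_⟩
    have : (QuotientGroup.mk p.1 : K ⧸ S) = QuotientGroup.mk x.out := by
      symm; rw [QuotientGroup.eq, hp3]; simpa [mul_assoc] using hp2
    rw [this, QuotientGroup.out_eq']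
  choose fA hfAmem hfAmk using exRep A hA
  choose fB hfBmem hfBmk using exRep B hB
  have fA_mk : ∀ a ∈ A, fA (QuotientGroup.mk a) = a := fun a ha =>
    uniq A hA _ a (hfAmem _) ha (hfAmk _)
  have fB_mk : ∀ b ∈ B, fB (QuotientGroup.mk b) = b := fun b hb =>
    uniq B hB _ b (hfBmem _) hb (hfBmk _)
  -- commutation modulo S
  have comm : ∀ a ∈ A, ∀ b ∈ B,
      (QuotientGroup.mk (a * b) : K ⧸ S) = QuotientGroup.mk (b * a) := by
    intro a ha b hb
    rw [QuotientGroup.eq]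
    have h1 : (a * b)⁻¹ * (b * a) = (a⁻¹ * b⁻¹ * a * b)⁻¹ := by group
    rw [h1]
    exact S.inv_mem (hconn a ha b hb)
  have smul_mk : ∀ (g k : K), g • (QuotientGroup.mk k : K ⧸ S) = QuotientGroup.mk (g * k) :=
    fun g k => rfl
  -- the loop multiplication
  set m : K ⧸ S → K ⧸ S → K ⧸ S := fun x y => fA x • y with hm
  have key : ∀ x y, m x y = fB y • x := by
    intro x y
    have hx : (QuotientGroup.mk (fA x) : K ⧸ S) = x := hfAmk x
    have hy : (QuotientGroup.mk (fB y) : K ⧸ S) = y := hfBmk y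
    calc m x y = fA x • y := rfl
    _ = fA x • (QuotientGroup.mk (fB y) : K ⧸ S) := by rw [hy]
    _ = QuotientGroup.mk (fA x * fB y) := smul_mk _ _
    _ = QuotientGroup.mk (fB y * fA x) := comm _ (hfAmem x) _ (hfBmem y)
    _ = fB y • (QuotientGroup.mk (fA x) : K ⧸ S) := (smul_mk _ _).symm
    _ = fB y • x := by rw [hx]
  have hA0 : fA (QuotientGroup.mk 1) ∈ (S : Set K) := by
    have := hfAmk (QuotientGroup.mk (1 : K))
    rw [QuotientGroup.eq] at this
    simpa using this
  have one_mul' : ∀ y, m (QuotientGroup.mk 1) y = y := by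
    intro y
    have hy : (QuotientGroup.mk (fB y) : K ⧸ S) = y := hfBmk y
    calc m (QuotientGroup.mk 1) y = fB y • (QuotientGroup.mk (1 : K) : K ⧸ S) := key _ _
    _ = QuotientGroup.mk (fB y * 1) := smul_mk _ _
    _ = y := by rw [mul_one, hy]
  have mul_one' : ∀ x, m x (QuotientGroup.mk 1) = x := by
    intro x
    calc m x (QuotientGroup.mk 1) = QuotientGroup.mk (fA x * 1) := smul_mk _ _
    _ = x := by rw [mul_one, hfAmk x]
  have left_bij' : ∀ x, Function.Bijective (m x) :=
    fun x => (MulAction.toPerm (fA x) : Equiv.Perm (K ⧸ S)).bijective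
  have right_bij' : ∀ y, Function.Bijective (fun x => m x y) := by
    intro y
    have : (fun x => m x y) = (fun x => fB y • x) := funext fun x => key x y
    rw [this]
    exact (MulAction.toPerm (fB y) : Equiv.Perm (K ⧸ S)).bijective
  set SL : LoopStruct (K ⧸ S) :=
    { mul := m, e := QuotientGroup.mk 1, one_mul := one_mul', mul_one := mul_one',
      left_bij := left_bij', right_bij := right_bij' } with hSL
  refine ⟨K ⧸ S, SL, ⟨?_⟩⟩
  have hLapp : ∀ x y, leftTrans SL x y = fA x • y := fun x y => rfl
  have hRapp : ∀ y x, rightTrans SL y x = fB y • x := fun y x => key x y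
  have hφapp : ∀ (g : K) (y : K ⧸ S), φ g y = g • y := fun g y => rfl
  have hL : Set.range (leftTrans SL) = φ '' A := by
    ext p
    constructor
    · rintro ⟨x, rfl⟩
      exact ⟨fA x, hfAmem x, Equiv.ext fun y => ((hLapp x y).trans (hφapp (fA x) y).symm).symm⟩
    · rintro ⟨a, ha, rfl⟩
      refine ⟨QuotientGroup.mk a, Equiv.ext fun y => ?_⟩
      rw [hLapp, fA_mk a ha, hφapp]
  have hR : Set.range (rightTrans SL) = φ '' B := by
    ext p
    constructor
    · rintro ⟨y, rfl⟩
      exact ⟨fB y, hfBmem y, Equiv.ext fun x => ((hRapp y x).trans (hφapp (fB y) x).symm).symm⟩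
    · rintro ⟨b, hb, rfl⟩
      refine ⟨QuotientGroup.mk b, Equiv.ext fun x => ?_⟩
      rw [hRapp, fB_mk b hb, hφapp]
  have hMG : MultGroup SL = Subgroup.map φ ⊤ := by
    rw [MultGroup, hL, hR, ← Set.image_union, ← MonoidHom.map_closure, hgen]
  exact (Subgroup.topEquiv.symm.trans
    ((Subgroup.equivMapOfInjective ⊤ φ hinj).trans (MulEquiv.subgroupCongr hMG.symm)))
end

section
/- Let L be a loop with identity e. Then the set Λ(L) of all left translations and the set R(L) of all right translations are left transversals to the inner mapping group Inn(L) in the multiplication group Mult(L); moreover a⁻¹b⁻¹ab ∈ Inn(L) for every a ∈ Λ(L) and b ∈ R(L), and the only normal subgroup of Mult(L) contained in Inn(L) is the trivial subgroup. -/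
/-- The inner mapping group `Inn(L)`: the stabilizer of `e` in `Mult(L)`. -/
noncomputable def InnGroup {L : Type*} (S : LoopStruct L) : Subgroup ↥(MultGroup S) :=
  Subgroup.comap (MultGroup S).subtype (MulAction.stabilizer (Equiv.Perm L) S.e)

/-- The set `Λ(L)` of all left translations, inside `Mult(L)`. -/
noncomputable def leftSet {L : Type*} (S : LoopStruct L) : Set ↥(MultGroup S) :=
  {g | ∃ a : L, (g : Equiv.Perm L) = leftTrans S a}

/-- The set `R(L)` of all right translations, inside `Mult(L)`. -/
noncomputable def rightSet {L : Type*} (S : LoopStruct L) : Set ↥(MultGroup S) :=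
  {g | ∃ a : L, (g : Equiv.Perm L) = rightTrans S a}

/-!
Mult(L) acts faithfully on L, Inn(L) is the stabilizer of e, and a ↦ λ_a and a ↦ ρ_a are sections
of the orbit map g ↦ g e, since λ_a e = a = ρ_a e. The image of any section of the orbit map is a
left transversal to the stabilizer; a normal subgroup fixing e fixes every point of the orbit
Mult(L) e = L, hence is trivial by faithfulness; and λ_a ρ_b e = ab = ρ_b λ_a e says that the
commutator of λ_a and ρ_b fixes e.
-/

namespace MulAction

variable {G X : Type*} [Group G] [MulAction G X]

theorem isLeftTransversal_range_stabilizer {f : X → G} {x : X} (hf : ∀ y, f y • x = y) :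
    IsLeftTransversal (Set.range f) (stabilizer G x) := by
  intro k
  refine ⟨(f (k • x), (f (k • x))⁻¹ * k),
    ⟨Set.mem_range_self _, ?_, (mul_inv_cancel_left _ _).symm⟩, ?_⟩
  · rw [SetLike.mem_coe, mem_stabilizer_iff, mul_smul, inv_smul_eq_iff, hf]
  · rintro ⟨_, s⟩ ⟨⟨y, rfl⟩, hs, rfl⟩
    have hy : (f y * s) • x = y := by rw [mul_smul, mem_stabilizer_iff.mp hs, hf]
    simp only [hy, inv_mul_cancel_left]

theorem commutator_mem_stabilizer {a b : G} {x : X} (h : a • b • x = b • a • x) :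
    a⁻¹ * b⁻¹ * a * b ∈ stabilizer G x := by
  rw [mem_stabilizer_iff, mul_smul, mul_smul, mul_smul, h, inv_smul_smul, inv_smul_smul]

theorem eq_bot_of_normal_le_stabilizer [FaithfulSMul G X] {N : Subgroup G} {x : X}
    (hx : Function.Surjective fun g : G => g • x) (hN : N.Normal) (hle : N ≤ stabilizer G x) :
    N = ⊥ := by
  refine (Subgroup.eq_bot_iff_forall N).2 fun n hn => eq_of_smul_eq_smul (α := X) fun y => ?_
  obtain ⟨g, rfl⟩ := hx y
  have hconj : (g⁻¹ * n * g) • x = x := hle (by simpa using hN.conj_mem n hn g⁻¹)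
  rw [mul_smul, mul_smul, inv_smul_eq_iff] at hconj
  exact hconj.trans (one_smul G _).symm

end MulAction

namespace LoopStruct

open MulAction

variable {L : Type*} (S : LoopStruct L)

noncomputable def lam (a : L) : MultGroup S :=
  ⟨leftTrans S a, Subgroup.subset_closure (Or.inl ⟨a, rfl⟩)⟩

noncomputable def rho (a : L) : MultGroup S :=
  ⟨rightTrans S a, Subgroup.subset_closure (Or.inr ⟨a, rfl⟩)⟩

theorem lam_smul (a x : L) : S.lam a • x = S.mul a x := rfl

theorem rho_smul (a x : L) : S.rho a • x = S.mul x a := rfl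

theorem lam_smul_e (a : L) : S.lam a • S.e = a := S.mul_one a

theorem rho_smul_e (a : L) : S.rho a • S.e = a := S.one_mul a

theorem lam_smul_rho_smul_e (a b : L) : S.lam a • S.rho b • S.e = S.rho b • S.lam a • S.e := by
  rw [lam_smul_e, rho_smul_e, lam_smul, rho_smul]

theorem leftSet_eq_range : leftSet S = Set.range S.lam := by
  ext g
  simp only [leftSet, Set.mem_ofPred_eq, Set.mem_range, Subtype.ext_iff, eq_comm]
  rfl

theorem rightSet_eq_range : rightSet S = Set.range S.rho := by
  ext g
  simp only [rightSet, Set.mem_ofPred_eq, Set.mem_range, Subtype.ext_iff, eq_comm]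
  rfl

theorem innGroup_eq_stabilizer : InnGroup S = stabilizer (MultGroup S) S.e := rfl

end LoopStruct

/-- `Λ(L)` and `R(L)` are `Inn(L)`-connected left transversals to `Inn(L)` in
`Mult(L)`, and the core of `Inn(L)` in `Mult(L)` is trivial. -/
theorem translations_are_connected_transversals (L : Type) (S : LoopStruct L) :
    IsLeftTransversal (leftSet S) ((InnGroup S : Subgroup ↥(MultGroup S)) : Set ↥(MultGroup S)) ∧
    IsLeftTransversal (rightSet S) ((InnGroup S : Subgroup ↥(MultGroup S)) : Set ↥(MultGroup S)) ∧
    (∀ a ∈ leftSet S, ∀ b ∈ rightSet S, a⁻¹ * b⁻¹ * a * b ∈ InnGroup S) ∧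
    (∀ N : Subgroup ↥(MultGroup S), N.Normal → N ≤ InnGroup S → N = ⊥) := by
  rw [S.leftSet_eq_range, S.rightSet_eq_range, S.innGroup_eq_stabilizer]
  refine ⟨MulAction.isLeftTransversal_range_stabilizer S.lam_smul_e,
    MulAction.isLeftTransversal_range_stabilizer S.rho_smul_e, ?_,
    fun N => MulAction.eq_bot_of_normal_le_stabilizer fun y => ⟨S.lam y, S.lam_smul_e y⟩⟩
  rintro _ ⟨a, rfl⟩ _ ⟨b, rfl⟩
  exact MulAction.commutator_mem_stabilizer (S.lam_smul_rho_smul_e a b)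
end

section
/- Let α : L → L' be a surjective homomorphism of loops (α(x·y) = α(x)·α(y) for all x, y, and α maps the identity of L to the identity of L'). Then there exists a surjective group homomorphism Φ : Mult(L) → Mult(L') such that Φ(λ_a) = λ_{α(a)} and Φ(ρ_a) = ρ_{α(a)} for every a ∈ L. -/
/-- A surjective loop homomorphism induces a surjective homomorphism of the
multiplication groups sending translations to translations. -/
theorem mult_group_hom_of_loop_hom (L L' : Type) (S : LoopStruct L) (S' : LoopStruct L')
    (alpha : L → L') (hsurj : Function.Surjective alpha)
    (hhom : ∀ x y : L, alpha (S.mul x y) = S'.mul (alpha x) (alpha y))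
    (he : alpha S.e = S'.e) :
    ∃ Phi : ↥(MultGroup S) →* ↥(MultGroup S'),
      Function.Surjective Phi ∧
      (∀ a : L, ∀ g : ↥(MultGroup S), (g : Equiv.Perm L) = leftTrans S a →
        ((Phi g : ↥(MultGroup S')) : Equiv.Perm L') = leftTrans S' (alpha a)) ∧
      (∀ a : L, ∀ g : ↥(MultGroup S), (g : Equiv.Perm L) = rightTrans S a →
        ((Phi g : ↥(MultGroup S')) : Equiv.Perm L') = rightTrans S' (alpha a)) := by

  classical
  have uniq : ∀ (g : Equiv.Perm L) (g₁ g₂ : Equiv.Perm L'),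
      (∀ x, alpha (g x) = g₁ (alpha x)) → (∀ x, alpha (g x) = g₂ (alpha x)) → g₁ = g₂ := by
    intro g g₁ g₂ h₁ h₂
    ext y
    obtain ⟨x, rfl⟩ := hsurj y
    rw [← h₁ x, h₂ x]
  have rel_mul : ∀ (g₁ g₂ : Equiv.Perm L) (g₁' g₂' : Equiv.Perm L'),
      (∀ x, alpha (g₁ x) = g₁' (alpha x)) → (∀ x, alpha (g₂ x) = g₂' (alpha x)) →
      ∀ x, alpha ((g₁ * g₂) x) = (g₁' * g₂') (alpha x) := by
    intro g₁ g₂ g₁' g₂' h₁ h₂ x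
    simp only [Equiv.Perm.mul_apply, h₂ x, h₁]
  have rel_inv : ∀ (g : Equiv.Perm L) (g' : Equiv.Perm L'),
      (∀ x, alpha (g x) = g' (alpha x)) → ∀ x, alpha (g⁻¹ x) = g'⁻¹ (alpha x) := by
    intro g g' h x
    apply g'.injective
    rw [← h (g⁻¹ x)]
    simp
  have rel_left : ∀ a x, alpha (leftTrans S a x) = leftTrans S' (alpha a) (alpha x) := by
    intro a x
    simp [leftTrans, hhom]
  have rel_right : ∀ a x, alpha (rightTrans S a x) = rightTrans S' (alpha a) (alpha x) := by
    intro a x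
    simp [rightTrans, hhom]
  have exists_fwd : ∀ g ∈ MultGroup S, ∃ g' ∈ MultGroup S',
      ∀ x, alpha (g x) = g' (alpha x) := by
    intro g hg
    induction hg using Subgroup.closure_induction with
    | mem g hg =>
      rcases hg with ⟨a, rfl⟩ | ⟨a, rfl⟩
      · exact ⟨leftTrans S' (alpha a), Subgroup.subset_closure (Or.inl ⟨_, rfl⟩), rel_left a⟩
      · exact ⟨rightTrans S' (alpha a), Subgroup.subset_closure (Or.inr ⟨_, rfl⟩), rel_right a⟩
    | one => exact ⟨1, one_mem _, fun x => rfl⟩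
    | mul g h _ _ ihg ihh =>
      obtain ⟨g', hg', hrg⟩ := ihg
      obtain ⟨h', hh', hrh⟩ := ihh
      exact ⟨g' * h', mul_mem hg' hh', rel_mul _ _ _ _ hrg hrh⟩
    | inv g _ ihg =>
      obtain ⟨g', hg', hrg⟩ := ihg
      exact ⟨g'⁻¹, inv_mem hg', rel_inv _ _ hrg⟩
  have exists_bwd : ∀ g' ∈ MultGroup S', ∃ g ∈ MultGroup S,
      ∀ x, alpha (g x) = g' (alpha x) := by
    intro g' hg'
    induction hg' using Subgroup.closure_induction with
    | mem g' hg' =>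
      rcases hg' with ⟨a', rfl⟩ | ⟨a', rfl⟩
      · obtain ⟨a, rfl⟩ := hsurj a'
        exact ⟨leftTrans S a, Subgroup.subset_closure (Or.inl ⟨_, rfl⟩), rel_left a⟩
      · obtain ⟨a, rfl⟩ := hsurj a'
        exact ⟨rightTrans S a, Subgroup.subset_closure (Or.inr ⟨_, rfl⟩), rel_right a⟩
    | one => exact ⟨1, one_mem _, fun x => rfl⟩
    | mul g h _ _ ihg ihh =>
      obtain ⟨g', hg', hrg⟩ := ihg
      obtain ⟨h', hh', hrh⟩ := ihh
      exact ⟨g' * h', mul_mem hg' hh', rel_mul _ _ _ _ hrg hrh⟩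
    | inv g _ ihg =>
      obtain ⟨g', hg', hrg⟩ := ihg
      exact ⟨g'⁻¹, inv_mem hg', rel_inv _ _ hrg⟩
  choose f hf hfrel using fun g : ↥(MultGroup S) => exists_fwd g g.2
  refine ⟨{ toFun := fun g => ⟨f g, hf g⟩
            map_one' := ?_
            map_mul' := ?_ }, ?_, ?_, ?_⟩
  · exact Subtype.ext (uniq 1 (f 1) 1 (hfrel 1) (fun x => rfl))
  · intro g h
    refine Subtype.ext (uniq (g * h) (f (g * h)) (f g * f h) ?_ ?_)
    · exact hfrel (g * h)
    · exact rel_mul g h _ _ (hfrel g) (hfrel h)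
  · intro y
    obtain ⟨g, hg, hr⟩ := exists_bwd y y.2
    refine ⟨⟨g, hg⟩, Subtype.ext (uniq g (f ⟨g, hg⟩) y (hfrel ⟨g, hg⟩) hr)⟩
  · intro a g hg
    refine uniq g (f g) (leftTrans S' (alpha a)) (hfrel g) ?_
    rw [hg]; exact rel_left a
  · intro a g hg
    refine uniq g (f g) (rightTrans S' (alpha a)) (hfrel g) ?_
    rw [hg]; exact rel_right a
end

section
/- Let L be a loop with identity e and let 𝒩 be a normal subgroup of the multiplication group Mult(L). Then the orbit 𝒩(e) = { n(e) : n ∈ 𝒩 } is a normal subloop of L. -/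
/-- Left division: the unique `y` with `x * y = b`. -/
noncomputable def ldiv {L : Type*} (S : LoopStruct L) (x b : L) : L :=
  (leftTrans S x).symm b

/-- Right division: the unique `y` with `y * x = b`. -/
noncomputable def rdiv {L : Type*} (S : LoopStruct L) (x b : L) : L :=
  (rightTrans S x).symm b

/-- Setwise product of two subsets of a loop. -/
def setMul {L : Type*} (S : LoopStruct L) (A B : Set L) : Set L :=
  Set.image2 S.mul A B

/-- A subloop: contains the identity and is closed under multiplication and both
divisions. -/
def IsSubloop {L : Type*} (S : LoopStruct L) (N : Set L) : Prop :=
  S.e ∈ N ∧ (∀ x ∈ N, ∀ y ∈ N, S.mul x y ∈ N) ∧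
    (∀ x ∈ N, ∀ y ∈ N, ldiv S x y ∈ N) ∧ (∀ x ∈ N, ∀ y ∈ N, rdiv S x y ∈ N)

/-- A normal subloop: a subloop `N` with `x·N = N·x`, `(x·N)·y = x·(N·y)` and
`x·(y·N) = (x·y)·N` for all `x, y`. -/
def IsNormalSubloop {L : Type*} (S : LoopStruct L) (N : Set L) : Prop :=
  IsSubloop S N ∧ ∀ x y : L,
    setMul S {x} N = setMul S N {x} ∧
    setMul S (setMul S {x} N) {y} = setMul S {x} (setMul S N {y}) ∧
    setMul S {x} (setMul S {y} N) = setMul S (setMul S {x} {y}) N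


section Aux

variable {L : Type} (S : LoopStruct L) (N : Subgroup ↥(MultGroup S))

@[simp] lemma leftTrans_apply (a b : L) : leftTrans S a b = S.mul a b := rfl
@[simp] lemma rightTrans_apply (a b : L) : rightTrans S a b = S.mul b a := rfl

noncomputable def lT (a : L) : ↥(MultGroup S) :=
  ⟨leftTrans S a, Subgroup.subset_closure (Set.mem_union_left _ ⟨a, rfl⟩)⟩

noncomputable def rT (a : L) : ↥(MultGroup S) :=
  ⟨rightTrans S a, Subgroup.subset_closure (Set.mem_union_right _ ⟨a, rfl⟩)⟩

@[simp] lemma lT_apply (a b : L) : ((lT S a : ↥(MultGroup S)) : Equiv.Perm L) b = S.mul a b := rfl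
@[simp] lemma rT_apply (a b : L) : ((rT S a : ↥(MultGroup S)) : Equiv.Perm L) b = S.mul b a := rfl

/-- The `N`-orbit of a point. -/
def orb (a : L) : Set L := (fun n : ↥(MultGroup S) => (n : Equiv.Perm L) a) '' (N : Set ↥(MultGroup S))

lemma mem_orb {a y : L} : y ∈ orb S N a ↔ ∃ n ∈ N, ((n : ↥(MultGroup S)) : Equiv.Perm L) a = y := by
  simp [orb]

lemma map_orb (hN : N.Normal) (g : ↥(MultGroup S)) (a : L) :
    (g : Equiv.Perm L) '' orb S N a = orb S N ((g : Equiv.Perm L) a) := by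
  ext y
  simp only [Set.mem_image, mem_orb]
  constructor
  · rintro ⟨z, ⟨n, hn, rfl⟩, rfl⟩
    refine ⟨g * n * g⁻¹, hN.conj_mem n hn g, ?_⟩
    simp [Equiv.Perm.mul_apply]
  · rintro ⟨n, hn, rfl⟩
    refine ⟨((g⁻¹ * n * g : ↥(MultGroup S)) : Equiv.Perm L) a, ⟨g⁻¹ * n * g, ?_, rfl⟩, ?_⟩
    · have := hN.conj_mem n hn g⁻¹
      simpa using this
    · simp [Equiv.Perm.mul_apply]

lemma orb_absorb {m : ↥(MultGroup S)} (hm : m ∈ N) (a : L) :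
    orb S N ((m : Equiv.Perm L) a) = orb S N a := by
  ext y
  simp only [mem_orb]
  constructor
  · rintro ⟨n, hn, rfl⟩
    exact ⟨n * m, mul_mem hn hm, by simp [Equiv.Perm.mul_apply]⟩
  · rintro ⟨n, hn, rfl⟩
    exact ⟨n * m⁻¹, mul_mem hn (inv_mem hm), by simp [Equiv.Perm.mul_apply]⟩

lemma orb_eq_of_mem {x : L} (hx : x ∈ orb S N S.e) : orb S N x = orb S N S.e := by
  rw [mem_orb] at hx
  obtain ⟨m, hm, rfl⟩ := hx
  exact orb_absorb S N hm S.e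

lemma setMul_singleton_left (x : L) (A : Set L) :
    setMul S {x} A = ((lT S x : ↥(MultGroup S)) : Equiv.Perm L) '' A := by
  simp only [setMul, Set.image2_singleton_left]
  rfl

lemma setMul_singleton_right (x : L) (A : Set L) :
    setMul S A {x} = ((rT S x : ↥(MultGroup S)) : Equiv.Perm L) '' A := by
  simp only [setMul, Set.image2_singleton_right]
  rfl

lemma setMul_orb_left (hN : N.Normal) (x a : L) :
    setMul S {x} (orb S N a) = orb S N (S.mul x a) := by
  rw [setMul_singleton_left, map_orb S N hN]; rfl

lemma setMul_orb_right (hN : N.Normal) (x a : L) :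
    setMul S (orb S N a) {x} = orb S N (S.mul a x) := by
  rw [setMul_singleton_right, map_orb S N hN]; rfl

end Aux

/-- The orbit of the identity under a normal subgroup of `Mult(L)` is a normal
subloop of `L`. -/
theorem orbit_of_normal_is_normal_subloop (L : Type) (S : LoopStruct L)
    (N : Subgroup ↥(MultGroup S)) (hN : N.Normal) :
    IsNormalSubloop S ((fun n : ↥(MultGroup S) => (n : Equiv.Perm L) S.e) '' (N : Set ↥(MultGroup S))) := by

  show IsNormalSubloop S (orb S N S.e)
  set K := orb S N S.e with hK
  have heK : S.e ∈ K := ⟨1, N.one_mem, by simp⟩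
  have hxe : ∀ x : L, S.mul x S.e = x := S.mul_one
  have hex : ∀ x : L, S.mul S.e x = x := S.one_mul
  constructor
  · refine ⟨heK, ?_, ?_, ?_⟩
    · -- multiplication
      intro x hx y hy
      have : S.mul x y ∈ orb S N x := by
        rw [← hxe x, ← setMul_orb_left S N hN x S.e]
        rw [hxe x]
        exact Set.mem_image2_of_mem rfl hy
      rwa [orb_eq_of_mem S N hx] at this
    · -- left division
      intro x hx y hy
      have h1 : ldiv S x y = (((lT S x)⁻¹ : ↥(MultGroup S)) : Equiv.Perm L) y := rfl
      have h2 : (((lT S x)⁻¹ : ↥(MultGroup S)) : Equiv.Perm L) x = S.e := by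
        have : ((lT S x : ↥(MultGroup S)) : Equiv.Perm L) S.e = x := by simp [hxe]
        calc (((lT S x)⁻¹ : ↥(MultGroup S)) : Equiv.Perm L) x
            = (((lT S x)⁻¹ : ↥(MultGroup S)) : Equiv.Perm L)
                (((lT S x : ↥(MultGroup S)) : Equiv.Perm L) S.e) := by rw [this]
          _ = S.e := by
                rw [← Equiv.Perm.mul_apply, ← Subgroup.coe_mul]
                simp
      have : ldiv S x y ∈ (((lT S x)⁻¹ : ↥(MultGroup S)) : Equiv.Perm L) '' K :=
        ⟨y, hy, h1.symm⟩
      rw [hK, ← orb_eq_of_mem S N hx, map_orb S N hN, h2, ← hK] at this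
      exact this
    · -- right division
      intro x hx y hy
      have h1 : rdiv S x y = (((rT S x)⁻¹ : ↥(MultGroup S)) : Equiv.Perm L) y := rfl
      have h2 : (((rT S x)⁻¹ : ↥(MultGroup S)) : Equiv.Perm L) x = S.e := by
        have : ((rT S x : ↥(MultGroup S)) : Equiv.Perm L) S.e = x := by simp [hex]
        calc (((rT S x)⁻¹ : ↥(MultGroup S)) : Equiv.Perm L) x
            = (((rT S x)⁻¹ : ↥(MultGroup S)) : Equiv.Perm L)
                (((rT S x : ↥(MultGroup S)) : Equiv.Perm L) S.e) := by rw [this]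
          _ = S.e := by
                rw [← Equiv.Perm.mul_apply, ← Subgroup.coe_mul]
                simp
      have : rdiv S x y ∈ (((rT S x)⁻¹ : ↥(MultGroup S)) : Equiv.Perm L) '' K :=
        ⟨y, hy, h1.symm⟩
      rw [hK, ← orb_eq_of_mem S N hx, map_orb S N hN, h2, ← hK] at this
      exact this
  · intro x y
    have h1K : ∀ z : L, setMul S {z} K = orb S N z := by
      intro z; rw [hK, setMul_orb_left S N hN, hxe]
    have hxK : setMul S {x} K = orb S N x := h1K x
    have hKx : ∀ z : L, setMul S K {z} = orb S N z := by
      intro z; rw [hK, setMul_orb_right S N hN, hex]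
    refine ⟨?_, ?_, ?_⟩
    · rw [hxK, hKx]
    · rw [hxK, setMul_orb_right S N hN, hKx, setMul_orb_left S N hN]
    · have hxy : setMul S {x} {y} = {S.mul x y} := by simp [setMul]
      rw [h1K y, setMul_orb_left S N hN, hxy, h1K (S.mul x y)]
end

section
/- Let f : ℝ³ → ℝ be a continuous function. Then the map g : z ↦ z + u·f(x₀, y₀, z) from ℝ to ℝ is bijective for every choice of x₀, y₀, u ∈ ℝ if and only if f does not depend on its third variable, i.e. f(x, y, z) = f(x, y, z') for all x, y, z, z' ∈ ℝ. -/
/-- For a continuous `f : ℝ³ → ℝ`, the map `z ↦ z + u·f(x₀, y₀, z)` is bijective for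
all `x₀, y₀, u` if and only if `f` does not depend on its third variable. -/
theorem bijective_iff_independent_of_third_variable
    (f : ℝ × ℝ × ℝ → ℝ) (hf : Continuous f) :
    (∀ x₀ y₀ u : ℝ, Function.Bijective (fun z : ℝ => z + u * f (x₀, y₀, z))) ↔
    (∀ x y z z' : ℝ, f (x, y, z) = f (x, y, z')) := by
  constructor
  · intro h x y z z'
    by_contra hne
    have hz : z ≠ z' := by rintro rfl; exact hne rfl
    have hab : f (x, y, z) - f (x, y, z') ≠ 0 := sub_ne_zero.mpr hne
    have key := (h x y ((z' - z) / (f (x, y, z) - f (x, y, z')))).injective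
      (a₁ := z) (a₂ := z') ?_
    · exact hz key
    · field_simp
      ring
  · intro h x y u
    have : (fun z : ℝ => z + u * f (x, y, z)) = fun z => z + u * f (x, y, 0) := by
      funext z; rw [h x y z 0]
    rw [this]
    exact (Equiv.addRight (u * f (x, y, 0))).bijective
end

section
/- Let f : ℝ → ℝ be a continuous function such that f(z₂) + e^{-z₂}·f(z₁) = f(z₁ + z₂) for all z₁, z₂ ∈ ℝ. Then there exists a real constant c such that f(z) = c·(1 − e^{-z}) for all z ∈ ℝ. -/
/-- A continuous solution of `f(z₂) + e^{-z₂} f(z₁) = f(z₁ + z₂)` has the form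
`f(z) = c (1 - e^{-z})`. -/
theorem continuous_solution_of_functional_equation
    (f : ℝ → ℝ) (hf : Continuous f)
    (hfe : ∀ z₁ z₂ : ℝ, f z₂ + Real.exp (-z₂) * f z₁ = f (z₁ + z₂)) :
    ∃ c : ℝ, ∀ z : ℝ, f z = c * (1 - Real.exp (-z)) := by
  have hlt : Real.exp (-1) < 1 := Real.exp_lt_one_iff.mpr (by norm_num)
  have hne : (1 - Real.exp (-1)) ≠ 0 := by linarith
  refine ⟨f 1 / (1 - Real.exp (-1)), fun z => ?_⟩
  have h1 := hfe 1 z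
  have h2 := hfe z 1
  rw [add_comm z 1] at h2
  have key : f z * (1 - Real.exp (-1)) = f 1 * (1 - Real.exp (-z)) := by
    linarith [h1, h2]
  field_simp
  linarith [key]
end

section
/- Let f : ℝ → ℝ be a continuous function with f(0) = 0. Define on ℝ³ the binary operation (x₁, y₁, z₁) ∗ (x₂, y₂, z₂) = (x₁ + x₂·e^{f(z₁)}, y₁ + y₂ + z₂·f(z₁), z₁ + z₂). Then (ℝ³, ∗) is a topological loop with identity element (0, 0, 0): the operation ∗ is continuous, (0,0,0) is a two-sided identity, for every a ∈ ℝ³ the left translation x ↦ a ∗ x and the right translation x ↦ x ∗ a are bijections of ℝ³, and the two division maps (a, b) ↦ a\b and (a, b) ↦ b/a are continuous. -/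
/-- The multiplication
`(x₁,y₁,z₁) ∗ (x₂,y₂,z₂) = (x₁ + x₂ e^{f(z₁)}, y₁ + y₂ + z₂ f(z₁), z₁ + z₂)`. -/
noncomputable def loopMul7 (f : ℝ → ℝ) (p q : ℝ × ℝ × ℝ) : ℝ × ℝ × ℝ :=
  (p.1 + q.1 * Real.exp (f p.2.2), p.2.1 + q.2.1 + q.2.2 * f p.2.2, p.2.2 + q.2.2)

noncomputable def loopLd7 (f : ℝ → ℝ) (a b : ℝ × ℝ × ℝ) : ℝ × ℝ × ℝ :=
  ((b.1 - a.1) * Real.exp (-(f a.2.2)),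
   b.2.1 - a.2.1 - (b.2.2 - a.2.2) * f a.2.2,
   b.2.2 - a.2.2)

noncomputable def loopRd7 (f : ℝ → ℝ) (a b : ℝ × ℝ × ℝ) : ℝ × ℝ × ℝ :=
  (b.1 - a.1 * Real.exp (f (b.2.2 - a.2.2)),
   b.2.1 - a.2.1 - a.2.2 * f (b.2.2 - a.2.2),
   b.2.2 - a.2.2)

/-- For every continuous `f : ℝ → ℝ` with `f 0 = 0`, the operation `loopMul7 f`
turns `ℝ³` into a topological loop with identity `(0,0,0)`. -/
theorem loopMul7_is_topological_loop (f : ℝ → ℝ) (hf : Continuous f) (hf0 : f 0 = 0) :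
    Continuous (fun p : (ℝ × ℝ × ℝ) × (ℝ × ℝ × ℝ) => loopMul7 f p.1 p.2) ∧
    (∀ a : ℝ × ℝ × ℝ, loopMul7 f ((0:ℝ), (0:ℝ), (0:ℝ)) a = a ∧
      loopMul7 f a ((0:ℝ), (0:ℝ), (0:ℝ)) = a) ∧
    (∀ a : ℝ × ℝ × ℝ, Function.Bijective (loopMul7 f a)) ∧
    (∀ a : ℝ × ℝ × ℝ, Function.Bijective (fun x => loopMul7 f x a)) ∧
    ∃ ld rd : (ℝ × ℝ × ℝ) → (ℝ × ℝ × ℝ) → (ℝ × ℝ × ℝ),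
      Continuous (fun p : (ℝ × ℝ × ℝ) × (ℝ × ℝ × ℝ) => ld p.1 p.2) ∧
      Continuous (fun p : (ℝ × ℝ × ℝ) × (ℝ × ℝ × ℝ) => rd p.1 p.2) ∧
      (∀ a b : ℝ × ℝ × ℝ, loopMul7 f a (ld a b) = b ∧ loopMul7 f (rd a b) a = b) := by
  have hmulld : ∀ a b : ℝ × ℝ × ℝ, loopMul7 f a (loopLd7 f a b) = b := by
    intro a b
    simp only [loopMul7, loopLd7]
    ext
    · simp [mul_assoc, ← Real.exp_add]
    · simp; ring
    · simp
  have hldmul : ∀ a b : ℝ × ℝ × ℝ, loopLd7 f a (loopMul7 f a b) = b := by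
    intro a b
    simp only [loopMul7, loopLd7]
    ext <;> simp
    · rw [mul_assoc, ← Real.exp_add]; simp
    · ring
  have hrdmul : ∀ a b : ℝ × ℝ × ℝ, loopMul7 f (loopRd7 f a b) a = b := by
    intro a b
    simp only [loopMul7, loopRd7]
    ext <;> simp <;> ring
  have hmulrd : ∀ a b : ℝ × ℝ × ℝ, loopRd7 f a (loopMul7 f b a) = b := by
    intro a b
    simp only [loopMul7, loopRd7]
    ext <;> simp <;> ring
  refine ⟨?_, ?_, ?_, ?_, loopLd7 f, loopRd7 f, ?_, ?_, fun a b => ⟨hmulld a b, hrdmul a b⟩⟩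
  · unfold loopMul7; fun_prop
  · intro a
    simp [loopMul7, hf0]
  · intro a
    exact ⟨Function.LeftInverse.injective (hldmul a),
      Function.RightInverse.surjective (hmulld a)⟩
  · intro a
    exact ⟨Function.LeftInverse.injective (g := fun b => loopRd7 f a b) (fun b => hmulrd a b),
      Function.RightInverse.surjective (g := fun b => loopRd7 f a b) (fun b => hrdmul a b)⟩
  · unfold loopLd7; fun_prop
  · unfold loopRd7; fun_prop
end

section
/- Let G be the group whose underlying set is ℝ⁴ with multiplication (x₁, x₂, x₃, x₄)·(y₁, y₂, y₃, y₄) = (x₁ + y₁·e^{x₄}, x₂ + y₂ + x₄·y₃, x₃ + y₃, x₄ + y₄). Let f : ℝ → ℝ be a continuous function with f(0) = 0. Then the subgroup of G generated by the set { (x, y, z, f(z)) : x, y, z ∈ ℝ } is all of G if and only if there is no l ∈ ℝ with f(z) = l·z for all z ∈ ℝ. -/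
/-- The underlying set `ℝ⁴` of the group `G`. -/
@[ext] structure G8 where
  x1 : ℝ
  x2 : ℝ
  x3 : ℝ
  x4 : ℝ

namespace G8

/-- `(x₁,x₂,x₃,x₄)·(y₁,y₂,y₃,y₄) = (x₁ + y₁e^{x₄}, x₂ + y₂ + x₄y₃, x₃ + y₃, x₄ + y₄)`. -/
noncomputable def gmul (a b : G8) : G8 :=
  ⟨a.x1 + b.x1 * Real.exp a.x4, a.x2 + b.x2 + a.x4 * b.x3, a.x3 + b.x3, a.x4 + b.x4⟩

/-- The identity element. -/
def gone : G8 := ⟨0, 0, 0, 0⟩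

/-- Inversion. -/
noncomputable def ginv (a : G8) : G8 :=
  ⟨-a.x1 * Real.exp (-a.x4), -a.x2 + a.x4 * a.x3, -a.x3, -a.x4⟩

noncomputable instance : Group G8 where
  mul := gmul
  one := gone
  inv := ginv
  mul_assoc a b c := by
    show gmul (gmul a b) c = gmul a (gmul b c)
    simp only [gmul, Real.exp_add, mk.injEq]
    refine ⟨by ring, by ring, by ring, by ring⟩
  one_mul a := by
    show gmul gone a = a
    simp [gmul, gone]
  mul_one a := by
    show gmul a gone = a
    simp [gmul, gone]
  inv_mul_cancel a := by
    show gmul (ginv a) a = gone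
    simp only [gmul, ginv, gone, mk.injEq, ← Real.exp_add]
    refine ⟨by simp, by ring, by ring, by ring⟩

end G8

/-!
Modulo the normal subgroup `{(u, v, 0, 0)}`, which the generating set contains because
`f 0 = 0`, `G` is the vector group `ℝ²` and the generating set is the graph of `f`. If `f` is
linear, its graph is a proper subgroup. Otherwise `f` is not additive, so the graph generates a
vertical vector `(0, c)` with `c = f z + f w - f (z + w) ≠ 0`; scaling `z` and `w` down to `0`
and applying the intermediate value theorem gives every `(0, y)` with `y` between `0` and `c`,
and a subgroup of `ℝ` containing an interval is all of `ℝ` since `ℝ` is connected.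
-/

open Set Filter Topology

theorem AddSubgroup.eq_top_of_mem_nhds {G : Type*} [AddGroup G] [TopologicalSpace G]
    [SeparatelyContinuousAdd G] [PreconnectedSpace G] (H : AddSubgroup G) {g : G}
    (hg : (H : Set G) ∈ 𝓝 g) : H = ⊤ := by
  have hopen := H.isOpen_of_mem_nhds hg
  exact AddSubgroup.coe_eq_univ.mp
    (IsClopen.eq_univ ⟨H.isClosed_of_isOpen hopen, hopen⟩ ⟨0, H.zero_mem⟩)

theorem AddSubgroup.eq_top_of_uIcc_subset {H : AddSubgroup ℝ} {c : ℝ} (hc : c ≠ 0)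
    (h : uIcc 0 c ⊆ H) : H = ⊤ := by
  refine H.eq_top_of_mem_nhds (g := c / 2) (mem_of_superset ?_ h)
  rcases hc.lt_or_gt with hc | hc
  · exact mem_of_superset (Icc_mem_nhds (by linarith) (by linarith)) Icc_subset_uIcc'
  · exact mem_of_superset (Icc_mem_nhds (by linarith) (by linarith)) Icc_subset_uIcc

theorem Subgroup.eq_top_iff_map_eq_top {G N : Type*} [Group G] [Group N] {f : G →* N}
    (hf : Function.Surjective f) {H : Subgroup G} (hker : f.ker ≤ H) :
    H = ⊤ ↔ H.map f = ⊤ := by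
  refine ⟨fun h => h ▸ map_top_of_surjective f hf, fun h => ?_⟩
  rw [← sup_eq_left.2 hker, ← comap_map_eq, h, comap_top]

theorem exists_eq_mul_of_continuous_of_map_add {f : ℝ → ℝ} (hf : Continuous f)
    (hadd : ∀ z w, f (z + w) = f z + f w) : ∃ l : ℝ, ∀ z, f z = l * z :=
  ⟨f 1, fun z => by simpa [mul_comm] using map_real_smul (AddMonoidHom.mk' f hadd) hf z 1⟩

theorem closure_graph_ne_top_of_linear {f : ℝ → ℝ} {l : ℝ} (hl : ∀ z, f z = l * z) :
    AddSubgroup.closure {p : ℝ × ℝ | p.2 = f p.1} ≠ ⊤ := by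
  set L := (LinearMap.snd ℝ ℝ ℝ - l • LinearMap.fst ℝ ℝ ℝ).ker.toAddSubgroup
  have hle : AddSubgroup.closure {p : ℝ × ℝ | p.2 = f p.1} ≤ L :=
    (AddSubgroup.closure_le L).2 fun p (hp : p.2 = f p.1) => by simp [L, hp, hl]
  intro htop
  have h01 : ((0 : ℝ), (1 : ℝ)) ∈ L := hle (htop ▸ AddSubgroup.mem_top _)
  simp [L] at h01

theorem closure_graph_eq_top_of_nonlinear {f : ℝ → ℝ} (hf : Continuous f) (hf0 : f 0 = 0)
    (hnl : ¬ ∃ l : ℝ, ∀ z, f z = l * z) :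
    AddSubgroup.closure {p : ℝ × ℝ | p.2 = f p.1} = ⊤ := by
  set K := AddSubgroup.closure {p : ℝ × ℝ | p.2 = f p.1}
  have hgraph : ∀ z, (z, f z) ∈ K := fun z => AddSubgroup.subset_closure rfl
  have hdefect : ∀ z w, (0, f z + f w - f (z + w)) ∈ K := fun z w => by
    simpa using K.sub_mem (K.add_mem (hgraph z) (hgraph w)) (hgraph (z + w))
  obtain ⟨z, w, hzw⟩ : ∃ z w, f (z + w) ≠ f z + f w := by
    by_contra! h
    exact hnl (exists_eq_mul_of_continuous_of_map_add hf h)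
  have hvert : K.comap (AddMonoidHom.inr ℝ ℝ) = ⊤ := by
    refine AddSubgroup.eq_top_of_uIcc_subset (sub_ne_zero.2 hzw.symm) fun y hy => ?_
    have hcont : Continuous fun t : ℝ => f (t * z) + f (t * w) - f (t * z + t * w) := by
      fun_prop
    obtain ⟨t, -, rfl⟩ := intermediate_value_uIcc (a := 0) (b := 1) hcont.continuousOn
      (by simpa [hf0] using hy)
    exact hdefect _ _
  rw [eq_top_iff]
  rintro ⟨a, b⟩ -
  have hb : (0, b - f a) ∈ K := AddSubgroup.mem_comap.1 (hvert ▸ AddSubgroup.mem_top _)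
  simpa using K.add_mem (hgraph a) hb

namespace G8

def proj : G8 →* Multiplicative (ℝ × ℝ) where
  toFun g := Multiplicative.ofAdd (g.x3, g.x4)
  map_one' := rfl
  map_mul' _ _ := rfl

theorem proj_surjective : Function.Surjective proj :=
  fun p => ⟨⟨0, 0, p.toAdd.1, p.toAdd.2⟩, rfl⟩

theorem mem_ker_proj {g : G8} : g ∈ proj.ker ↔ g.x3 = 0 ∧ g.x4 = 0 :=
  MonoidHom.mem_ker.trans (ofAdd_eq_one.trans Prod.mk_eq_zero)

theorem closure_section_eq_top_iff {f : ℝ → ℝ} (hf0 : f 0 = 0) :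
    Subgroup.closure {g : G8 | ∃ x y z : ℝ, g = ⟨x, y, z, f z⟩} = ⊤ ↔
      AddSubgroup.closure {p : ℝ × ℝ | p.2 = f p.1} = ⊤ := by
  set S := {g : G8 | ∃ x y z : ℝ, g = ⟨x, y, z, f z⟩}
  have hker : proj.ker ≤ Subgroup.closure S := fun g hg => by
    obtain ⟨h3, h4⟩ := mem_ker_proj.1 hg
    exact Subgroup.subset_closure ⟨g.x1, g.x2, 0, by ext <;> simp [h3, h4, hf0]⟩
  have himage : proj '' S = Multiplicative.toAdd ⁻¹' {p : ℝ × ℝ | p.2 = f p.1} := by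
    ext p
    constructor
    · rintro ⟨_, ⟨x, y, z, rfl⟩, rfl⟩
      rfl
    · intro (hp : p.toAdd.2 = f p.toAdd.1)
      exact ⟨⟨0, 0, p.toAdd.1, p.toAdd.2⟩, ⟨0, 0, p.toAdd.1, by rw [← hp]⟩, rfl⟩
  rw [Subgroup.eq_top_iff_map_eq_top proj_surjective hker, MonoidHom.map_closure, himage,
    ← AddSubgroup.toSubgroup_closure, map_eq_top_iff]

end G8

/-- The set `{(x, y, z, f(z)) : x, y, z ∈ ℝ}` generates `G` if and only if `f` is
not linear. -/
theorem section_generates_iff_nonlinear (f : ℝ → ℝ) (hf : Continuous f) (hf0 : f 0 = 0) :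
    Subgroup.closure {g : G8 | ∃ x y z : ℝ, g = ⟨x, y, z, f z⟩} = ⊤ ↔
      ¬ ∃ l : ℝ, ∀ z : ℝ, f z = l * z :=
  (G8.closure_section_eq_top_iff hf0).trans
    ⟨fun h ⟨_, hl⟩ => closure_graph_ne_top_of_linear hl h,
      closure_graph_eq_top_of_nonlinear hf hf0⟩
end

section
/- Let h : ℝ² → ℝ be a continuous function with h(0, 0) = 0. Define on ℝ³ the binary operation (x₁, y₁, z₁) ∗ (x₂, y₂, z₂) = (x₁ + x₂·e^{z₁}, y₁ + y₂ − z₂·h(x₁, z₁), z₁ + z₂). Then (ℝ³, ∗) is a topological loop with identity element (0, 0, 0): the operation ∗ is continuous, (0,0,0) is a two-sided identity, for every a ∈ ℝ³ the left translation x ↦ a ∗ x and the right translation x ↦ x ∗ a are bijections of ℝ³, and the two division maps (a, b) ↦ a\b and (a, b) ↦ b/a are continuous. -/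
/-- The multiplication
`(x₁,y₁,z₁) ∗ (x₂,y₂,z₂) = (x₁ + x₂ e^{z₁}, y₁ + y₂ − z₂ h(x₁,z₁), z₁ + z₂)`. -/
noncomputable def loopMul9 (h : ℝ × ℝ → ℝ) (p q : ℝ × ℝ × ℝ) : ℝ × ℝ × ℝ :=
  (p.1 + q.1 * Real.exp p.2.2, p.2.1 + q.2.1 - q.2.2 * h (p.1, p.2.2), p.2.2 + q.2.2)

/-! Both divisions are solved coordinatewise: the third coordinate of a product is additive,
which fixes `z`; knowing `z`, the first coordinate is affine in the unknown `x`, and then the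
second is affine in the unknown `y`. The solutions are explicit formulas in `exp` and `h`,
hence continuous. -/

namespace LoopMul9

variable (h : ℝ × ℝ → ℝ)

/-- `leftDiv h a b` is `a \ b`. -/
noncomputable def leftDiv (a b : ℝ × ℝ × ℝ) : ℝ × ℝ × ℝ :=
  ((b.1 - a.1) * Real.exp (-a.2.2),
    b.2.1 - a.2.1 + (b.2.2 - a.2.2) * h (a.1, a.2.2),
    b.2.2 - a.2.2)

/-- `rightDiv h a b` is `b / a`. -/
noncomputable def rightDiv (a b : ℝ × ℝ × ℝ) : ℝ × ℝ × ℝ :=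
  (b.1 - a.1 * Real.exp (b.2.2 - a.2.2),
    b.2.1 - a.2.1 + a.2.2 * h (b.1 - a.1 * Real.exp (b.2.2 - a.2.2), b.2.2 - a.2.2),
    b.2.2 - a.2.2)

theorem loopMul9_leftDiv (a b : ℝ × ℝ × ℝ) : loopMul9 h a (leftDiv h a b) = b := by
  have hexp : Real.exp (-a.2.2) * Real.exp a.2.2 = 1 := by
    rw [← Real.exp_add, neg_add_cancel, Real.exp_zero]
  ext <;> simp only [loopMul9, leftDiv]
  · linear_combination (b.1 - a.1) * hexp
  all_goals ring

theorem leftDiv_loopMul9 (a b : ℝ × ℝ × ℝ) : leftDiv h a (loopMul9 h a b) = b := by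
  have hexp : Real.exp a.2.2 * Real.exp (-a.2.2) = 1 := by
    rw [← Real.exp_add, add_neg_cancel, Real.exp_zero]
  ext <;> simp only [loopMul9, leftDiv]
  · linear_combination b.1 * hexp
  all_goals ring

theorem loopMul9_rightDiv (a b : ℝ × ℝ × ℝ) : loopMul9 h (rightDiv h a b) a = b := by
  ext <;> simp only [loopMul9, rightDiv] <;> ring

theorem rightDiv_loopMul9 (a b : ℝ × ℝ × ℝ) : rightDiv h a (loopMul9 h b a) = b := by
  ext <;> simp only [loopMul9, rightDiv, add_sub_cancel_right]
  ring

theorem bijective_loopMul9_left (a : ℝ × ℝ × ℝ) : Function.Bijective (loopMul9 h a) :=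
  Function.bijective_iff_has_inverse.2 ⟨leftDiv h a, leftDiv_loopMul9 h a, loopMul9_leftDiv h a⟩

theorem bijective_loopMul9_right (a : ℝ × ℝ × ℝ) :
    Function.Bijective (fun x => loopMul9 h x a) :=
  Function.bijective_iff_has_inverse.2
    ⟨rightDiv h a, rightDiv_loopMul9 h a, loopMul9_rightDiv h a⟩

theorem loopMul9_zero_left (hh0 : h (0, 0) = 0) (a : ℝ × ℝ × ℝ) : loopMul9 h 0 a = a := by
  ext <;> simp [loopMul9, Prod.zero_eq_mk, hh0]

theorem loopMul9_zero_right (a : ℝ × ℝ × ℝ) : loopMul9 h a 0 = a := by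
  ext <;> simp [loopMul9]

variable {h}

theorem continuous_loopMul9 (hh : Continuous h) :
    Continuous (fun p : (ℝ × ℝ × ℝ) × (ℝ × ℝ × ℝ) => loopMul9 h p.1 p.2) := by
  unfold loopMul9; fun_prop

theorem continuous_leftDiv (hh : Continuous h) :
    Continuous (fun p : (ℝ × ℝ × ℝ) × (ℝ × ℝ × ℝ) => leftDiv h p.1 p.2) := by
  unfold leftDiv; fun_prop

theorem continuous_rightDiv (hh : Continuous h) :
    Continuous (fun p : (ℝ × ℝ × ℝ) × (ℝ × ℝ × ℝ) => rightDiv h p.1 p.2) := by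
  unfold rightDiv; fun_prop

end LoopMul9

open LoopMul9 in
/-- For every continuous `h : ℝ² → ℝ` with `h(0,0) = 0`, the operation `loopMul9 h`
turns `ℝ³` into a topological loop with identity `(0,0,0)`. -/
theorem loopMul9_is_topological_loop (h : ℝ × ℝ → ℝ) (hh : Continuous h)
    (hh0 : h (0, 0) = 0) :
    Continuous (fun p : (ℝ × ℝ × ℝ) × (ℝ × ℝ × ℝ) => loopMul9 h p.1 p.2) ∧
    (∀ a : ℝ × ℝ × ℝ, loopMul9 h ((0:ℝ), (0:ℝ), (0:ℝ)) a = a ∧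
      loopMul9 h a ((0:ℝ), (0:ℝ), (0:ℝ)) = a) ∧
    (∀ a : ℝ × ℝ × ℝ, Function.Bijective (loopMul9 h a)) ∧
    (∀ a : ℝ × ℝ × ℝ, Function.Bijective (fun x => loopMul9 h x a)) ∧
    ∃ ld rd : (ℝ × ℝ × ℝ) → (ℝ × ℝ × ℝ) → (ℝ × ℝ × ℝ),
      Continuous (fun p : (ℝ × ℝ × ℝ) × (ℝ × ℝ × ℝ) => ld p.1 p.2) ∧
      Continuous (fun p : (ℝ × ℝ × ℝ) × (ℝ × ℝ × ℝ) => rd p.1 p.2) ∧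
      (∀ a b : ℝ × ℝ × ℝ, loopMul9 h a (ld a b) = b ∧ loopMul9 h (rd a b) a = b) :=
  ⟨continuous_loopMul9 hh,
    fun a => ⟨loopMul9_zero_left h hh0 a, loopMul9_zero_right h a⟩,
    bijective_loopMul9_left h, bijective_loopMul9_right h,
    leftDiv h, rightDiv h, continuous_leftDiv hh, continuous_rightDiv hh,
    fun a b => ⟨loopMul9_leftDiv h a b, loopMul9_rightDiv h a b⟩⟩
end

section
/- Let G₁ be the group whose underlying set is ℝ⁵ with multiplication (x₁,x₂,x₃,x₄,x₅)·(y₁,y₂,y₃,y₄,y₅) = (x₁+y₁, x₂+y₂, x₃+y₃−x₁y₂, y₄+x₄e^{y₅}, x₅+y₅). Let H = { (0, t, k, k, 0) : t, k ∈ ℝ }, A = { (x, e^{z}−1, y, 0, z) : x, y, z ∈ ℝ } and B = { (n, 0, l, −n, m) : l, m, n ∈ ℝ }. Then H is a subgroup of G₁, A and B are left transversals to H in G₁, a⁻¹b⁻¹ab ∈ H for all a ∈ A and b ∈ B, and the subgroup of G₁ generated by A ∪ B is all of G₁. -/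
/-- The underlying set `ℝ⁵` of the group `G₁ = ℱ₃ × 𝓛₂`. -/
@[ext] structure G1 where
  x1 : ℝ
  x2 : ℝ
  x3 : ℝ
  x4 : ℝ
  x5 : ℝ

namespace G1

/-- `(x₁,…,x₅)·(y₁,…,y₅) = (x₁+y₁, x₂+y₂, x₃+y₃−x₁y₂, y₄+x₄e^{y₅}, x₅+y₅)`. -/
noncomputable def gmul (a b : G1) : G1 :=
  ⟨a.x1 + b.x1, a.x2 + b.x2, a.x3 + b.x3 - a.x1 * b.x2,
    b.x4 + a.x4 * Real.exp b.x5, a.x5 + b.x5⟩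

/-- The identity element. -/
def gone : G1 := ⟨0, 0, 0, 0, 0⟩

/-- Inversion. -/
noncomputable def ginv (a : G1) : G1 :=
  ⟨-a.x1, -a.x2, -a.x3 - a.x1 * a.x2, -a.x4 * Real.exp (-a.x5), -a.x5⟩

noncomputable instance : Group G1 where
  mul := gmul
  one := gone
  inv := ginv
  mul_assoc a b c := by
    show gmul (gmul a b) c = gmul a (gmul b c)
    simp only [gmul, Real.exp_add, mk.injEq]
    refine ⟨by ring, by ring, by ring, by ring, by ring⟩
  one_mul a := by
    show gmul gone a = a
    simp [gmul, gone]
  mul_one a := by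
    show gmul a gone = a
    simp [gmul, gone]
  inv_mul_cancel a := by
    show gmul (ginv a) a = gone
    simp only [gmul, ginv, gone, mk.injEq]
    refine ⟨by ring, by ring, by ring, ?_, by ring⟩
    rw [neg_mul, neg_mul, mul_assoc, ← Real.exp_add, neg_add_cancel, Real.exp_zero, mul_one]
    ring

end G1

namespace G1
theorem mul_def (a b : G1) : a * b = gmul a b := rfl
theorem inv_def (a : G1) : a⁻¹ = ginv a := rfl
end G1

/-- The subgroup `H = {(0,t,k,k,0)}`. -/
noncomputable def Hsub : Subgroup G1 where
  carrier := {g : G1 | ∃ t k : ℝ, g = ⟨0, t, k, k, 0⟩}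
  mul_mem' := by
    rintro _ _ ⟨t, k, rfl⟩ ⟨t', k', rfl⟩
    exact ⟨t + t', k + k', by ext <;> simp [G1.mul_def, G1.gmul] <;> ring⟩
  one_mem' := ⟨0, 0, rfl⟩
  inv_mem' := by
    rintro _ ⟨t, k, rfl⟩
    exact ⟨-t, -k, by ext <;> simp [G1.inv_def, G1.ginv]⟩

/-- `H = {(0,t,k,k,0)}` is a subgroup of `G₁`;
`A = {(x, e^z−1, y, 0, z)}` and `B = {(n, 0, l, −n, m)}` are `H`-connected
left transversals to `H` in `G₁` and together they generate `G₁`. -/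
theorem G1_connected_transversals :
    ∃ H : Subgroup G1,
      (H : Set G1) = {g : G1 | ∃ t k : ℝ, g = ⟨0, t, k, k, 0⟩} ∧
      IsLeftTransversal {g : G1 | ∃ x y z : ℝ, g = ⟨x, Real.exp z - 1, y, 0, z⟩} (H : Set G1) ∧
      IsLeftTransversal {g : G1 | ∃ l m n : ℝ, g = ⟨n, 0, l, -n, m⟩} (H : Set G1) ∧
      (∀ a ∈ {g : G1 | ∃ x y z : ℝ, g = ⟨x, Real.exp z - 1, y, 0, z⟩},
        ∀ b ∈ {g : G1 | ∃ l m n : ℝ, g = ⟨n, 0, l, -n, m⟩},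
          a⁻¹ * b⁻¹ * a * b ∈ H) ∧
      Subgroup.closure ({g : G1 | ∃ x y z : ℝ, g = ⟨x, Real.exp z - 1, y, 0, z⟩} ∪
        {g : G1 | ∃ l m n : ℝ, g = ⟨n, 0, l, -n, m⟩}) = ⊤ := by
  refine ⟨Hsub, rfl, ?_, ?_, ?_, ?_⟩
  · -- A is a left transversal
    intro g
    refine ⟨(⟨g.x1, Real.exp g.x5 - 1,
        g.x3 - g.x4 + g.x1 * (g.x2 - (Real.exp g.x5 - 1)), 0, g.x5⟩,
        ⟨0, g.x2 - (Real.exp g.x5 - 1), g.x4, g.x4, 0⟩),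
      ⟨⟨g.x1, _, g.x5, rfl⟩, ⟨_, g.x4, rfl⟩, ?_⟩, ?_⟩
    · ext <;> simp [G1.mul_def, G1.gmul] <;> ring
    · rintro ⟨a, s⟩ ⟨⟨x, y, z, rfl⟩, ⟨t, k, rfl⟩, hg⟩
      have e1 := congrArg G1.x1 hg
      have e2 := congrArg G1.x2 hg
      have e3 := congrArg G1.x3 hg
      have e4 := congrArg G1.x4 hg
      have e5 := congrArg G1.x5 hg
      simp only [G1.mul_def, G1.gmul, add_zero, zero_add, Real.exp_zero, mul_one,
        zero_mul, mul_zero] at e1 e2 e3 e4 e5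
      subst e1; subst e5; subst e4
      have ht : t = g.x2 - (Real.exp g.x5 - 1) := by linarith
      subst ht
      have hy : y = g.x3 - g.x4 + g.x1 * (g.x2 - (Real.exp g.x5 - 1)) := by linarith
      subst hy
      rfl
  · -- B is a left transversal
    intro g
    refine ⟨(⟨g.x1, 0, g.x3 - g.x4 - g.x1 + g.x1 * g.x2, -g.x1, g.x5⟩,
        ⟨0, g.x2, g.x4 + g.x1, g.x4 + g.x1, 0⟩),
      ⟨⟨_, g.x5, g.x1, rfl⟩, ⟨g.x2, _, rfl⟩, ?_⟩, ?_⟩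
    · ext <;> simp [G1.mul_def, G1.gmul] <;> ring
    · rintro ⟨b, s⟩ ⟨⟨l, m, n, rfl⟩, ⟨t, k, rfl⟩, hg⟩
      have e1 := congrArg G1.x1 hg
      have e2 := congrArg G1.x2 hg
      have e3 := congrArg G1.x3 hg
      have e4 := congrArg G1.x4 hg
      have e5 := congrArg G1.x5 hg
      simp only [G1.mul_def, G1.gmul, add_zero, zero_add, Real.exp_zero, mul_one,
        zero_mul, mul_zero] at e1 e2 e3 e4 e5
      subst e1; subst e5; subst e2
      have hk : k = g.x4 + g.x1 := by linarith
      subst hk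
      have hl : l = g.x3 - g.x4 - g.x1 + g.x1 * g.x2 := by linarith
      subst hl
      rfl
  · -- commutators lie in H
    rintro _ ⟨x, y, z, rfl⟩ _ ⟨l, m, n, rfl⟩
    refine ⟨0, n * (Real.exp z - 1), ?_⟩
    simp only [G1.mul_def, G1.inv_def, G1.gmul, G1.ginv, G1.mk.injEq]
    refine ⟨by ring, by ring, by ring, ?_, by ring⟩
    simp only [Real.exp_neg, neg_zero, zero_mul, mul_zero, add_zero, zero_add]
    field_simp
    ring
  · -- closure is everything
    set S := ({g : G1 | ∃ x y z : ℝ, g = ⟨x, Real.exp z - 1, y, 0, z⟩} ∪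
        {g : G1 | ∃ l m n : ℝ, g = ⟨n, 0, l, -n, m⟩})
    have memA : ∀ x y z : ℝ, (⟨x, Real.exp z - 1, y, 0, z⟩ : G1) ∈ Subgroup.closure S :=
      fun x y z => Subgroup.subset_closure (Or.inl ⟨x, y, z, rfl⟩)
    have memB : ∀ l m n : ℝ, (⟨n, 0, l, -n, m⟩ : G1) ∈ Subgroup.closure S :=
      fun l m n => Subgroup.subset_closure (Or.inr ⟨l, m, n, rfl⟩)
    have slice : ∀ g : G1, g.x2 = 0 → g ∈ Subgroup.closure S := by
      intro g hg
      have h := mul_mem (memA (g.x1 + g.x4) g.x3 0) (memB 0 g.x5 (-g.x4))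
      have : g = (⟨g.x1 + g.x4, Real.exp 0 - 1, g.x3, 0, 0⟩ : G1) *
          ⟨-g.x4, 0, 0, g.x4, g.x5⟩ := by
        ext <;> simp [G1.mul_def, G1.gmul, hg] <;> ring
      simp only [neg_neg] at h
      rwa [← this] at h
    have main : ∀ g : G1, -1 < g.x2 → g ∈ Subgroup.closure S := by
      intro g hg
      have ha := memA 0 0 (Real.log (1 + g.x2))
      have hexp : Real.exp (Real.log (1 + g.x2)) = 1 + g.x2 :=
        Real.exp_log (by linarith)
      have hrest : ((⟨0, Real.exp (Real.log (1 + g.x2)) - 1, 0, 0,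
          Real.log (1 + g.x2)⟩ : G1)⁻¹ * g) ∈ Subgroup.closure S := by
        apply slice
        simp [G1.mul_def, G1.inv_def, G1.gmul, G1.ginv, hexp]
      have := mul_mem ha hrest
      rwa [mul_inv_cancel_left] at this
    rw [eq_top_iff]
    intro g _
    by_cases h : -1 < g.x2
    · exact main g h
    · have : g⁻¹ ∈ Subgroup.closure S := by
        apply main
        have : (g⁻¹).x2 = -g.x2 := rfl
        rw [this]; linarith
      simpa using inv_mem this
end

section
/- Let G₂ be the group whose underlying set is ℝ⁵ with multiplication (x₁,x₂,x₃,x₄,x₅)·(y₁,y₂,y₃,y₄,y₅) = (y₁+x₁e^{y₂}, x₂+y₂, y₃+x₃e^{y₄}, x₄+y₄, x₅+y₅). Let H = { (t, 0, k, 0, t+k) : t, k ∈ ℝ }, A = { (2−e^{x₂}−e^{x₄}, x₂, 0, x₄, x₅+2−e^{x₂}−e^{x₄}) : x₂, x₄, x₅ ∈ ℝ } and B = { (1−e^{y₂}, y₂, 1−e^{y₂}, y₄, y₅) : y₂, y₄, y₅ ∈ ℝ }. Then H is a subgroup of G₂, A and B are left transversals to H in G₂, a⁻¹b⁻¹ab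 ∈ H for all a ∈ A and b ∈ B, and the subgroup of G₂ generated by A ∪ B is all of G₂. -/
/-- The underlying set `ℝ⁵` of the group `G₂ = 𝓛₂ × 𝓛₂ × ℝ`. -/
@[ext] structure G2 where
  x1 : ℝ
  x2 : ℝ
  x3 : ℝ
  x4 : ℝ
  x5 : ℝ

namespace G2

/-- `(x₁,…,x₅)·(y₁,…,y₅) = (y₁+x₁e^{y₂}, x₂+y₂, y₃+x₃e^{y₄}, x₄+y₄, x₅+y₅)`. -/
noncomputable def gmul (a b : G2) : G2 :=
  ⟨b.x1 + a.x1 * Real.exp b.x2, a.x2 + b.x2, b.x3 + a.x3 * Real.exp b.x4,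
    a.x4 + b.x4, a.x5 + b.x5⟩

/-- The identity element. -/
def gone : G2 := ⟨0, 0, 0, 0, 0⟩

/-- Inversion. -/
noncomputable def ginv (a : G2) : G2 :=
  ⟨-a.x1 * Real.exp (-a.x2), -a.x2, -a.x3 * Real.exp (-a.x4), -a.x4, -a.x5⟩

noncomputable instance : Group G2 where
  mul := gmul
  one := gone
  inv := ginv
  mul_assoc a b c := by
    show gmul (gmul a b) c = gmul a (gmul b c)
    simp only [gmul, Real.exp_add, mk.injEq]
    refine ⟨by ring, by ring, by ring, by ring, by ring⟩
  one_mul a := by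
    show gmul gone a = a
    simp [gmul, gone]
  mul_one a := by
    show gmul a gone = a
    simp [gmul, gone]
  inv_mul_cancel a := by
    show gmul (ginv a) a = gone
    simp only [gmul, ginv, gone, mk.injEq]
    refine ⟨?_, by ring, ?_, by ring, by ring⟩
    · rw [neg_mul, neg_mul, mul_assoc, ← Real.exp_add, neg_add_cancel, Real.exp_zero, mul_one]
      ring
    · rw [neg_mul, neg_mul, mul_assoc, ← Real.exp_add, neg_add_cancel, Real.exp_zero, mul_one]
      ring

end G2

/-!
`H` is cut out by `x₂ = x₄ = 0`, `x₅ = x₁ + x₃`, so the left cosets `gH` are the fibres of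
`g ↦ (x₂, x₄, x₅ - x₁ - x₃)`, and `A` and `B` each meet every fibre exactly once.
A commutator `g⁻¹h⁻¹gh` has `x₂ = x₄ = x₅ = 0`, `x₁ = g₁(e^{h₂} - 1) - h₁(e^{g₂} - 1)` and the
analogous `x₃`; for `a ∈ A`, `b ∈ B` these two entries cancel.
For generation, `B` contains the `(x₄, x₅)`-plane, with it `A` yields the `x₁`-axis, `B` then the
elements `(0, γ, 1 - e^γ, 0, 0)`, their commutators with the `x₄`-axis the `x₃`-axis, and every
element is a product of elements of these one-parameter subgroups.
-/

open Real

theorem isLeftTransversal_of_bijOn {G X : Type*} [Group G] {A : Set G} {S : Subgroup G}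
    (f : G → X) (hf : ∀ a b, a⁻¹ * b ∈ S ↔ f a = f b) (hA : Set.BijOn f A Set.univ) :
    IsLeftTransversal A S := by
  intro k
  obtain ⟨a, ha, hak⟩ := hA.surjOn (Set.mem_univ (f k))
  refine ⟨(a, a⁻¹ * k), ⟨ha, (hf a k).2 hak, (mul_inv_cancel_left a k).symm⟩, ?_⟩
  rintro ⟨a', s'⟩ ⟨ha', hs', rfl⟩
  have : a' = a := hA.injOn ha' ha <| by
    rw [hak, ← hf, inv_mul_cancel_left]
    exact hs'
  subst this
  simp

theorem Subgroup.forall_mem_of_forall_lt_one {G : Type*} [Group G] (K : Subgroup G)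
    (f : ℝ → G) (hf : ∀ t, f (-t) = (f t)⁻¹) (h : ∀ t < 1, f t ∈ K) (t : ℝ) : f t ∈ K := by
  rcases lt_or_ge t 1 with ht | ht
  · exact h t ht
  · simpa [hf] using K.inv_mem (h (-t) (by linarith))

namespace G2

@[simp] lemma mk_mul_mk (a₁ a₂ a₃ a₄ a₅ b₁ b₂ b₃ b₄ b₅ : ℝ) :
    (⟨a₁, a₂, a₃, a₄, a₅⟩ : G2) * ⟨b₁, b₂, b₃, b₄, b₅⟩ =
      ⟨b₁ + a₁ * exp b₂, a₂ + b₂, b₃ + a₃ * exp b₄, a₄ + b₄, a₅ + b₅⟩ := rfl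

@[simp] lemma inv_mk (a₁ a₂ a₃ a₄ a₅ : ℝ) :
    (⟨a₁, a₂, a₃, a₄, a₅⟩ : G2)⁻¹ = ⟨-a₁ * exp (-a₂), -a₂, -a₃ * exp (-a₄), -a₄, -a₅⟩ := rfl

lemma one_eq_mk : (1 : G2) = ⟨0, 0, 0, 0, 0⟩ := rfl

noncomputable def H : Subgroup G2 where
  carrier := {g | ∃ t k : ℝ, g = ⟨t, 0, k, 0, t + k⟩}
  one_mem' := ⟨0, 0, by simp [one_eq_mk]⟩
  mul_mem' := by
    rintro _ _ ⟨t, k, rfl⟩ ⟨t', k', rfl⟩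
    exact ⟨t' + t, k' + k, by ext <;> simp; ring⟩
  inv_mem' := by
    rintro _ ⟨t, k, rfl⟩
    exact ⟨-t, -k, by ext <;> simp; ring⟩

def A : Set G2 :=
  {g | ∃ x₂ x₄ x₅ : ℝ, g = ⟨2 - exp x₂ - exp x₄, x₂, 0, x₄, x₅ + 2 - exp x₂ - exp x₄⟩}

def B : Set G2 :=
  {g | ∃ y₂ y₄ y₅ : ℝ, g = ⟨1 - exp y₂, y₂, 1 - exp y₂, y₄, y₅⟩}

lemma mem_H_iff {g : G2} : g ∈ H ↔ g.x2 = 0 ∧ g.x4 = 0 ∧ g.x5 = g.x1 + g.x3 := by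
  constructor
  · rintro ⟨t, k, rfl⟩
    simp
  · rintro ⟨h₂, h₄, h₅⟩
    exact ⟨g.x1, g.x3, by ext <;> simp [*]⟩

def cosetCoord (g : G2) : ℝ × ℝ × ℝ := (g.x2, g.x4, g.x5 - g.x1 - g.x3)

lemma inv_mul_mem_H_iff (a b : G2) : a⁻¹ * b ∈ H ↔ cosetCoord a = cosetCoord b := by
  obtain ⟨a₁, a₂, a₃, a₄, a₅⟩ := a
  obtain ⟨b₁, b₂, b₃, b₄, b₅⟩ := b
  simp only [inv_mk, mk_mul_mk, mem_H_iff, cosetCoord, Prod.mk.injEq]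
  constructor
  · rintro ⟨h₂, h₄, h₅⟩
    obtain rfl : b₂ = a₂ := by linarith
    obtain rfl : b₄ = a₄ := by linarith
    simp only [mul_assoc, ← exp_add, neg_add_cancel, exp_zero, mul_one] at h₅
    exact ⟨rfl, rfl, by linarith⟩
  · rintro ⟨rfl, rfl, h₅⟩
    simp only [mul_assoc, ← exp_add, neg_add_cancel, exp_zero, mul_one, true_and]
    linarith

lemma isLeftTransversal_A : IsLeftTransversal A H := by
  refine isLeftTransversal_of_bijOn cosetCoord inv_mul_mem_H_iff
    ⟨Set.mapsTo_univ _ _, ?_, fun ⟨c₂, c₄, c₅⟩ _ => ⟨_, ⟨c₂, c₄, c₅, rfl⟩, ?_⟩⟩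
  · rintro _ ⟨x₂, x₄, x₅, rfl⟩ _ ⟨x₂', x₄', x₅', rfl⟩ h
    simp only [cosetCoord, Prod.mk.injEq] at h
    obtain ⟨rfl, rfl, h₅⟩ := h
    obtain rfl : x₅ = x₅' := by linarith
    rfl
  · simp only [cosetCoord, Prod.mk.injEq, true_and]
    ring

lemma isLeftTransversal_B : IsLeftTransversal B H := by
  refine isLeftTransversal_of_bijOn cosetCoord inv_mul_mem_H_iff
    ⟨Set.mapsTo_univ _ _, ?_,
      fun ⟨c₂, c₄, c₅⟩ _ => ⟨_, ⟨c₂, c₄, c₅ + 2 - 2 * exp c₂, rfl⟩, ?_⟩⟩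
  · rintro _ ⟨y₂, y₄, y₅, rfl⟩ _ ⟨y₂', y₄', y₅', rfl⟩ h
    simp only [cosetCoord, Prod.mk.injEq] at h
    obtain ⟨rfl, rfl, h₅⟩ := h
    obtain rfl : y₅ = y₅' := by linarith
    rfl
  · simp only [cosetCoord, Prod.mk.injEq, true_and]
    ring

lemma commutator_eq (g h : G2) : g⁻¹ * h⁻¹ * g * h =
    ⟨g.x1 * (exp h.x2 - 1) - h.x1 * (exp g.x2 - 1), 0,
      g.x3 * (exp h.x4 - 1) - h.x3 * (exp g.x4 - 1), 0, 0⟩ := by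
  obtain ⟨g₁, g₂, g₃, g₄, g₅⟩ := g
  obtain ⟨h₁, h₂, h₃, h₄, h₅⟩ := h
  simp only [inv_mk, mk_mul_mk, exp_neg]
  ext <;> dsimp only <;> field_simp <;> ring

lemma commutator_mem_H {a b : G2} (ha : a ∈ A) (hb : b ∈ B) : a⁻¹ * b⁻¹ * a * b ∈ H := by
  obtain ⟨x₂, x₄, x₅, rfl⟩ := ha
  obtain ⟨y₂, y₄, y₅, rfl⟩ := hb
  rw [commutator_eq, mem_H_iff]
  simp only [true_and]
  ring

lemma mul_decomposition (g : G2) :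
    (⟨g.x1 * exp (-g.x2), 0, 0, 0, 0⟩ : G2) * ⟨0, g.x2, 0, 0, 0⟩ *
      ⟨0, 0, g.x3 * exp (-g.x4), 0, 0⟩ * ⟨0, 0, 0, g.x4, g.x5⟩ = g := by
  ext <;> simp [mul_assoc, ← exp_add]

lemma eq_top_of_axes_mem (K : Subgroup G2) (h₁ : ∀ t, ⟨t, 0, 0, 0, 0⟩ ∈ K)
    (h₂ : ∀ t, ⟨0, t, 0, 0, 0⟩ ∈ K) (h₃ : ∀ t, ⟨0, 0, t, 0, 0⟩ ∈ K)
    (h₄₅ : ∀ u s, ⟨0, 0, 0, u, s⟩ ∈ K) : K = ⊤ := by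
  refine K.eq_top_iff'.2 fun g => ?_
  rw [← mul_decomposition g]
  exact K.mul_mem (K.mul_mem (K.mul_mem (h₁ _) (h₂ _)) (h₃ _)) (h₄₅ _ _)

lemma closure_A_union_B : Subgroup.closure (A ∪ B) = ⊤ := by
  set C := Subgroup.closure (A ∪ B)
  have hA : ∀ x₂ x₄ x₅, (⟨2 - exp x₂ - exp x₄, x₂, 0, x₄, x₅ + 2 - exp x₂ - exp x₄⟩ : G2) ∈ C :=
    fun x₂ x₄ x₅ => Subgroup.subset_closure (Or.inl ⟨x₂, x₄, x₅, rfl⟩)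
  have hB : ∀ y₂ y₄ y₅, (⟨1 - exp y₂, y₂, 1 - exp y₂, y₄, y₅⟩ : G2) ∈ C :=
    fun y₂ y₄ y₅ => Subgroup.subset_closure (Or.inr ⟨y₂, y₄, y₅, rfl⟩)
  have h₄₅ : ∀ u s, (⟨0, 0, 0, u, s⟩ : G2) ∈ C := fun u s => by simpa using hB 0 u s
  have h₁ : ∀ t, (⟨t, 0, 0, 0, 0⟩ : G2) ∈ C := by
    refine C.forall_mem_of_forall_lt_one (fun t => ⟨t, 0, 0, 0, 0⟩) (fun t => by simp) ?_
    intro t ht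
    have hβ : exp (log (1 - t)) = 1 - t := exp_log (by linarith)
    convert C.mul_mem (hA 0 (log (1 - t)) 0) (h₄₅ (-log (1 - t)) (-t)) using 1
    simp only [mk_mul_mk, exp_zero, hβ]
    ext <;> simp <;> ring
  have h₂₃ : ∀ γ, (⟨0, γ, 1 - exp γ, 0, 0⟩ : G2) ∈ C := fun γ => by
    convert C.mul_mem (hB γ 0 0) (h₁ (exp γ - 1)) using 1
    simp
  have h₃ : ∀ k, (⟨0, 0, k, 0, 0⟩ : G2) ∈ C := by
    refine C.forall_mem_of_forall_lt_one (fun k => ⟨0, 0, k, 0, 0⟩) (fun k => by simp) ?_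
    intro k hk
    have hγ : exp (log 2) = 2 := exp_log two_pos
    have hu : exp (log (1 - k)) = 1 - k := exp_log (by linarith)
    have hg := h₂₃ (log 2)
    have hh := h₄₅ (log (1 - k)) 0
    convert C.mul_mem (C.mul_mem (C.mul_mem (C.inv_mem hg) (C.inv_mem hh)) hg) hh using 1
    simp only [commutator_eq, hγ, hu]
    ext <;> simp; ring
  have h₂ : ∀ γ, (⟨0, γ, 0, 0, 0⟩ : G2) ∈ C := fun γ => by
    convert C.mul_mem (h₂₃ γ) (h₃ (exp γ - 1)) using 1
    simp
  exact eq_top_of_axes_mem C h₁ h₂ h₃ h₄₅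

end G2

/-- `H = {(t,0,k,0,t+k)}` is a subgroup of `G₂`; the indicated sets `A` and `B` are
`H`-connected left transversals to `H` in `G₂` and together they generate `G₂`. -/
theorem G2_connected_transversals :
    ∃ H : Subgroup G2,
      (H : Set G2) = {g : G2 | ∃ t k : ℝ, g = ⟨t, 0, k, 0, t + k⟩} ∧
      IsLeftTransversal {g : G2 | ∃ x2 x4 x5 : ℝ,
          g = ⟨2 - Real.exp x2 - Real.exp x4, x2, 0, x4,
                x5 + 2 - Real.exp x2 - Real.exp x4⟩} (H : Set G2) ∧
      IsLeftTransversal {g : G2 | ∃ y2 y4 y5 : ℝ,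
          g = ⟨1 - Real.exp y2, y2, 1 - Real.exp y2, y4, y5⟩} (H : Set G2) ∧
      (∀ a ∈ {g : G2 | ∃ x2 x4 x5 : ℝ,
          g = ⟨2 - Real.exp x2 - Real.exp x4, x2, 0, x4,
                x5 + 2 - Real.exp x2 - Real.exp x4⟩},
        ∀ b ∈ {g : G2 | ∃ y2 y4 y5 : ℝ,
          g = ⟨1 - Real.exp y2, y2, 1 - Real.exp y2, y4, y5⟩},
          a⁻¹ * b⁻¹ * a * b ∈ H) ∧
      Subgroup.closure
        ({g : G2 | ∃ x2 x4 x5 : ℝ,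
          g = ⟨2 - Real.exp x2 - Real.exp x4, x2, 0, x4,
                x5 + 2 - Real.exp x2 - Real.exp x4⟩} ∪
         {g : G2 | ∃ y2 y4 y5 : ℝ,
          g = ⟨1 - Real.exp y2, y2, 1 - Real.exp y2, y4, y5⟩}) = ⊤ :=
  ⟨G2.H, rfl, G2.isLeftTransversal_A, G2.isLeftTransversal_B,
    fun _ ha _ hb => G2.commutator_mem_H ha hb, G2.closure_A_union_B⟩
end

section
/- Let G₅ be the group whose underlying set is ℝ⁵ with multiplication (x₁,x₂,x₃,x₄,x₅)·(y₁,y₂,y₃,y₄,y₅) = (y₁+x₁e^{y₃}, y₂+x₂e^{y₃}+x₁y₃e^{y₃}, x₃+y₃, x₄+y₄, x₅+y₅). Let H = { (x, y, 0, y, 0) : x, y ∈ ℝ }, A = { (0, 1−e^{k₁}(1+k₁), k₁, k₂+1−e^{k₁}(1+k₁), k₃) : k₁, k₂, k₃ ∈ ℝ } and B = { (1−e^{l₁}, 1−e^{l₁}, l₁, l₂, l₃) : l₁, l₂, l₃ ∈ ℝ }. Then H is a subgroup of G₅, A and B are left transversals to H in G₅, a⁻¹b⁻¹ab ∈ H for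 all a ∈ A and b ∈ B, and the subgroup of G₅ generated by A ∪ B is all of G₅. -/
/-- The underlying set `ℝ⁵` of the group `G₅`. -/
@[ext] structure G5 where
  x1 : ℝ
  x2 : ℝ
  x3 : ℝ
  x4 : ℝ
  x5 : ℝ

namespace G5

/-- `(x₁,…,x₅)·(y₁,…,y₅)
  = (y₁+x₁e^{y₃}, y₂+x₂e^{y₃}+x₁y₃e^{y₃}, x₃+y₃, x₄+y₄, x₅+y₅)`. -/
noncomputable def gmul (a b : G5) : G5 :=
  ⟨b.x1 + a.x1 * Real.exp b.x3, b.x2 + a.x2 * Real.exp b.x3 + a.x1 * b.x3 * Real.exp b.x3,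
    a.x3 + b.x3, a.x4 + b.x4, a.x5 + b.x5⟩

/-- The identity element. -/
def gone : G5 := ⟨0, 0, 0, 0, 0⟩

/-- Inversion. -/
noncomputable def ginv (a : G5) : G5 :=
  ⟨-a.x1 * Real.exp (-a.x3), (-a.x2 + a.x1 * a.x3) * Real.exp (-a.x3), -a.x3, -a.x4, -a.x5⟩

noncomputable instance : Group G5 where
  mul := gmul
  one := gone
  inv := ginv
  mul_assoc a b c := by
    show gmul (gmul a b) c = gmul a (gmul b c)
    simp only [gmul, Real.exp_add, mk.injEq]
    refine ⟨by ring, by ring, by ring, by ring, by ring⟩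
  one_mul a := by
    show gmul gone a = a
    simp [gmul, gone]
  mul_one a := by
    show gmul a gone = a
    simp [gmul, gone]
  inv_mul_cancel a := by
    show gmul (ginv a) a = gone
    have key : Real.exp (-a.x3) * Real.exp a.x3 = 1 := by
      rw [← Real.exp_add, neg_add_cancel, Real.exp_zero]
    simp only [gmul, ginv, gone, mk.injEq]
    refine ⟨by linear_combination (-a.x1) * key, by linear_combination (-a.x2) * key,
      by ring, by ring, by ring⟩

end G5


namespace G5

lemma mul_def (a b : G5) : a * b = gmul a b := rfl
lemma inv_def (a : G5) : a⁻¹ = ginv a := rfl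

end G5

/-- `H = {(x,y,0,y,0)}` is a subgroup of `G₅`; the indicated sets `A` and `B` are
`H`-connected left transversals to `H` in `G₅` and together they generate `G₅`. -/
theorem G5_connected_transversals :
    ∃ H : Subgroup G5,
      (H : Set G5) = {g : G5 | ∃ x y : ℝ, g = ⟨x, y, 0, y, 0⟩} ∧
      IsLeftTransversal {g : G5 | ∃ k1 k2 k3 : ℝ,
          g = ⟨0, 1 - Real.exp k1 * (1 + k1), k1, k2 + 1 - Real.exp k1 * (1 + k1), k3⟩}
        (H : Set G5) ∧
      IsLeftTransversal {g : G5 | ∃ l1 l2 l3 : ℝ,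
          g = ⟨1 - Real.exp l1, 1 - Real.exp l1, l1, l2, l3⟩} (H : Set G5) ∧
      (∀ a ∈ {g : G5 | ∃ k1 k2 k3 : ℝ,
          g = ⟨0, 1 - Real.exp k1 * (1 + k1), k1, k2 + 1 - Real.exp k1 * (1 + k1), k3⟩},
        ∀ b ∈ {g : G5 | ∃ l1 l2 l3 : ℝ,
          g = ⟨1 - Real.exp l1, 1 - Real.exp l1, l1, l2, l3⟩},
          a⁻¹ * b⁻¹ * a * b ∈ H) ∧
      Subgroup.closure
        ({g : G5 | ∃ k1 k2 k3 : ℝ,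
          g = ⟨0, 1 - Real.exp k1 * (1 + k1), k1, k2 + 1 - Real.exp k1 * (1 + k1), k3⟩} ∪
         {g : G5 | ∃ l1 l2 l3 : ℝ,
          g = ⟨1 - Real.exp l1, 1 - Real.exp l1, l1, l2, l3⟩}) = ⊤ := by
  classical
  set f : ℝ → ℝ := fun k => 1 - Real.exp k * (1 + k) with hf
  refine ⟨{
      carrier := {g : G5 | ∃ x y : ℝ, g = ⟨x, y, 0, y, 0⟩}
      mul_mem' := by
        rintro a b ⟨x, y, rfl⟩ ⟨x', y', rfl⟩
        exact ⟨x' + x, y' + y, by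
          show G5.gmul _ _ = _
          simp [G5.gmul]; ring⟩
      one_mem' := ⟨0, 0, rfl⟩
      inv_mem' := by
        rintro a ⟨x, y, rfl⟩
        exact ⟨-x, -y, by
          show G5.ginv _ = _
          simp [G5.ginv]⟩ }, rfl, ?_, ?_, ?_, ?_⟩
  · -- A is a left transversal
    intro k
    refine ⟨(⟨0, 1 - Real.exp k.x3 * (1 + k.x3), k.x3,
        (k.x4 - k.x2) + 1 - Real.exp k.x3 * (1 + k.x3), k.x5⟩,
        ⟨k.x1, k.x2 - (1 - Real.exp k.x3 * (1 + k.x3)), 0,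
        k.x2 - (1 - Real.exp k.x3 * (1 + k.x3)), 0⟩),
      ⟨⟨k.x3, k.x4 - k.x2, k.x5, rfl⟩,
        ⟨k.x1, k.x2 - (1 - Real.exp k.x3 * (1 + k.x3)), rfl⟩, ?_⟩, ?_⟩
    · apply G5.ext <;> simp [G5.mul_def, G5.gmul] <;> ring
    · rintro ⟨a, s⟩ ⟨⟨k1, k2, k3, rfl⟩, ⟨x, y, rfl⟩, rfl⟩
      simp only [G5.mul_def, G5.gmul, Real.exp_zero, mul_one, mul_zero, add_zero, zero_add,
        zero_mul]
      refine Prod.ext ?_ ?_ <;> apply G5.ext <;> simp <;> ring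
  · -- B is a left transversal
    intro k
    refine ⟨(⟨1 - Real.exp k.x3, 1 - Real.exp k.x3, k.x3,
        (k.x4 - k.x2) + 1 - Real.exp k.x3, k.x5⟩,
        ⟨k.x1 - (1 - Real.exp k.x3), k.x2 - (1 - Real.exp k.x3), 0,
        k.x2 - (1 - Real.exp k.x3), 0⟩),
      ⟨⟨k.x3, (k.x4 - k.x2) + 1 - Real.exp k.x3, k.x5, rfl⟩,
        ⟨k.x1 - (1 - Real.exp k.x3), k.x2 - (1 - Real.exp k.x3), rfl⟩, ?_⟩, ?_⟩
    · apply G5.ext <;> simp [G5.mul_def, G5.gmul] <;> ring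
    · rintro ⟨a, s⟩ ⟨⟨l1, l2, l3, rfl⟩, ⟨x, y, rfl⟩, rfl⟩
      simp only [G5.mul_def, G5.gmul, Real.exp_zero, mul_one, mul_zero, add_zero, zero_add,
        zero_mul]
      refine Prod.ext ?_ ?_ <;> apply G5.ext <;> simp <;> ring
  · -- commutator condition
    rintro a ⟨k1, k2, k3, rfl⟩ b ⟨l1, l2, l3, rfl⟩
    refine ⟨1 - Real.exp l1 + (Real.exp l1 * Real.exp k1 - Real.exp k1), 0, ?_⟩
    apply G5.ext <;>
      simp only [G5.mul_def, G5.inv_def, G5.gmul, G5.ginv, Real.exp_add, Real.exp_neg] <;>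
      field_simp <;> ring
  · -- closure is everything
    rw [eq_top_iff]
    set S : Set G5 := _ ∪ _ with hS
    intro g _
    have hA : ∀ k1 k2 k3 : ℝ, (⟨0, 1 - Real.exp k1 * (1 + k1), k1,
        k2 + 1 - Real.exp k1 * (1 + k1), k3⟩ : G5) ∈ Subgroup.closure S :=
      fun k1 k2 k3 => Subgroup.subset_closure (Or.inl ⟨k1, k2, k3, rfl⟩)
    have hB : ∀ l1 l2 l3 : ℝ, (⟨1 - Real.exp l1, 1 - Real.exp l1, l1, l2, l3⟩ : G5)
        ∈ Subgroup.closure S :=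
      fun l1 l2 l3 => Subgroup.subset_closure (Or.inr ⟨l1, l2, l3, rfl⟩)
    have hZ : ∀ s t : ℝ, (⟨0, 0, 0, s, t⟩ : G5) ∈ Subgroup.closure S := by
      intro s t
      have := hA 0 s t
      norm_num at this
      exact this
    have hU : ∀ k : ℝ, (⟨1 - Real.exp (-k), -k, 0, 0, 0⟩ : G5) ∈ Subgroup.closure S := by
      intro k
      have h1 := mul_mem (mul_mem (hA k 0 0) (hB (-k) 0 0)) (hZ (-(1 - Real.exp k * (1 + k))) 0)
      have he : ((⟨0, 1 - Real.exp k * (1 + k), k, 0 + 1 - Real.exp k * (1 + k), 0⟩ : G5) *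
          ⟨1 - Real.exp (-k), 1 - Real.exp (-k), -k, 0, 0⟩) *
          ⟨0, 0, 0, -(1 - Real.exp k * (1 + k)), 0⟩ =
          (⟨1 - Real.exp (-k), -k, 0, 0, 0⟩ : G5) := by
        apply G5.ext <;>
          simp only [G5.mul_def, G5.gmul, Real.exp_zero, Real.exp_neg] <;>
          field_simp <;> ring
      rwa [he] at h1
    have hV : ∀ k : ℝ, (⟨Real.exp k - 1, -k, 0, 0, 0⟩ : G5) ∈ Subgroup.closure S := by
      intro k
      have h1 := mul_mem (mul_mem (hB (-k) 0 0) (hA k 0 0)) (hZ (-(1 - Real.exp k * (1 + k))) 0)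
      have he : ((⟨1 - Real.exp (-k), 1 - Real.exp (-k), -k, 0, 0⟩ : G5) *
          ⟨0, 1 - Real.exp k * (1 + k), k, 0 + 1 - Real.exp k * (1 + k), 0⟩) *
          ⟨0, 0, 0, -(1 - Real.exp k * (1 + k)), 0⟩ =
          (⟨Real.exp k - 1, -k, 0, 0, 0⟩ : G5) := by
        apply G5.ext <;>
          simp only [G5.mul_def, G5.gmul, Real.exp_zero, Real.exp_neg] <;>
          field_simp <;> ring
      rwa [he] at h1
    have hP : ∀ t : ℝ, (⟨t, 0, 0, 0, 0⟩ : G5) ∈ Subgroup.closure S := by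
      have hPnn : ∀ t : ℝ, 0 ≤ t → (⟨t, 0, 0, 0, 0⟩ : G5) ∈ Subgroup.closure S := by
        intro t ht
        set k : ℝ := 2 * Real.arsinh (Real.sqrt t / 2) with hk
        have hval : Real.exp k + Real.exp (-k) - 2 = t := by
          have h1 : Real.exp k + Real.exp (-k) = 2 * Real.cosh k := by
            rw [Real.cosh_eq]; ring
          rw [h1, hk, Real.cosh_two_mul, Real.cosh_sq, Real.sinh_arsinh]
          have : Real.sqrt t ^ 2 = t := Real.sq_sqrt ht
          nlinarith [this]
        have h1 := mul_mem (hV k) (inv_mem (hU k))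
        have he : (⟨Real.exp k - 1, -k, 0, 0, 0⟩ : G5) *
            (⟨1 - Real.exp (-k), -k, 0, 0, 0⟩ : G5)⁻¹ = (⟨t, 0, 0, 0, 0⟩ : G5) := by
          apply G5.ext <;>
            simp only [G5.mul_def, G5.inv_def, G5.gmul, G5.ginv, Real.exp_zero, neg_zero] <;>
            simp <;> linarith [hval]
        rwa [he] at h1
      intro t
      rcases le_or_gt 0 t with ht | ht
      · exact hPnn t ht
      · have h1 := inv_mem (hPnn (-t) (by linarith))
        have he : (⟨-t, 0, 0, 0, 0⟩ : G5)⁻¹ = (⟨t, 0, 0, 0, 0⟩ : G5) := by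
          apply G5.ext <;> simp [G5.inv_def, G5.ginv]
        rwa [he] at h1
    have hQ : ∀ p q : ℝ, (⟨p, q, 0, 0, 0⟩ : G5) ∈ Subgroup.closure S := by
      intro p q
      have h1 := mul_mem (hP (p - (1 - Real.exp q))) (hU (-q))
      have he : (⟨p - (1 - Real.exp q), 0, 0, 0, 0⟩ : G5) *
          (⟨1 - Real.exp (-(-q)), -(-q), 0, 0, 0⟩ : G5) = (⟨p, q, 0, 0, 0⟩ : G5) := by
        apply G5.ext <;> simp [G5.mul_def, G5.gmul] <;> ring
      rwa [he] at h1
    have hT : ∀ g : G5, g.x3 = 0 → g ∈ Subgroup.closure S := by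
      intro g hg
      have h1 := mul_mem (hQ g.x1 g.x2) (hZ g.x4 g.x5)
      have he : (⟨g.x1, g.x2, 0, 0, 0⟩ : G5) * (⟨0, 0, 0, g.x4, g.x5⟩ : G5) = g := by
        apply G5.ext <;> simp [G5.mul_def, G5.gmul, hg]
      rwa [he] at h1
    have hb := hB g.x3 0 0
    have h1 : g * (⟨1 - Real.exp g.x3, 1 - Real.exp g.x3, g.x3, 0, 0⟩ : G5)⁻¹ ∈
        Subgroup.closure S := by
      apply hT
      simp [G5.mul_def, G5.inv_def, G5.gmul, G5.ginv]
    have := mul_mem h1 hb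
    rwa [inv_mul_cancel_right] at this
end

section
/- Let f₁, f₂, h₁, h₂ : ℝ → ℝ be functions satisfying h₁(l)(1 − cos k) + h₂(l)·sin k = f₁(k)(1 − cos l) + f₂(k)·sin l for all k, l ∈ ℝ. Then each of the four functions has the form α(1 − cos t) + β·sin t: there exist real constants a₁, a₂, b₁, b₂, c₁, c₂, d₁, d₂ such that h₁(t) = a₁(1 − cos t) + a₂ sin t, h₂(t) = b₁(1 − cos t) + b₂ sin t, f₁(t) = c₁(1 − cos t) + c₂ sin t and f₂(t) = d₁(1 − cos t) + d₂ sin t for all t ∈ ℝ. -/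
/-- If `h₁(l)(1 − cos k) + h₂(l) sin k = f₁(k)(1 − cos l) + f₂(k) sin l` for all
`k, l`, then all four functions are of the form `α(1 − cos t) + β sin t`. -/
theorem functions_of_trigonometric_form
    (f₁ f₂ h₁ h₂ : ℝ → ℝ)
    (h : ∀ k l : ℝ, h₁ l * (1 - Real.cos k) + h₂ l * Real.sin k =
      f₁ k * (1 - Real.cos l) + f₂ k * Real.sin l) :
    ∃ a₁ a₂ b₁ b₂ c₁ c₂ d₁ d₂ : ℝ,
      (∀ t : ℝ, h₁ t = a₁ * (1 - Real.cos t) + a₂ * Real.sin t) ∧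
      (∀ t : ℝ, h₂ t = b₁ * (1 - Real.cos t) + b₂ * Real.sin t) ∧
      (∀ t : ℝ, f₁ t = c₁ * (1 - Real.cos t) + c₂ * Real.sin t) ∧
      (∀ t : ℝ, f₂ t = d₁ * (1 - Real.cos t) + d₂ * Real.sin t) := by
  refine ⟨f₁ Real.pi / 2, f₂ Real.pi / 2,
    f₁ (Real.pi/2) - f₁ Real.pi / 2, f₂ (Real.pi/2) - f₂ Real.pi / 2,
    h₁ Real.pi / 2, h₂ Real.pi / 2,
    h₁ (Real.pi/2) - h₁ Real.pi / 2, h₂ (Real.pi/2) - h₂ Real.pi / 2,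
    ?_, ?_, ?_, ?_⟩ <;> intro t
  · have := h Real.pi t
    simp [Real.cos_pi, Real.sin_pi] at this
    linarith
  · have h1 := h Real.pi t
    have h2 := h (Real.pi/2) t
    simp [Real.cos_pi, Real.sin_pi, Real.cos_pi_div_two, Real.sin_pi_div_two] at h1 h2
    linarith
  · have := h t Real.pi
    simp [Real.cos_pi, Real.sin_pi] at this
    linarith
  · have h1 := h t Real.pi
    have h2 := h t (Real.pi/2)
    simp [Real.cos_pi, Real.sin_pi, Real.cos_pi_div_two, Real.sin_pi_div_two] at h1 h2
    linarith
end
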